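/- arXiv:1711.04839 — 6 statements merged into one kernel-verified Lean document; each statement's English description precedes it below -/
import Mathlib

section
/- If (x_v*, λ_v*) minimizes F over the feasible set of the distributed problem, then there exists (x*, λ*) ∈ ℝ^d × ℝ_{≥0} minimizing J over ℝ^d × ℝ_{≥0} such that x_v* = 𝟙ₙ ⊗ x* and λ_v* = λ*𝟙ₙ. -/
open scoped BigOperators RealInnerProductSpace
open Finset

noncomputable section

abbrev Vec (d : ℕ) := EuclideanSpace ℝ (Fin d)

/-- g_k(x, λ, ξ) := f(x, ξ) − λ‖ξ − ξ̂ᵏ‖². -/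
def gk {d m N : ℕ} (f : Vec d → Vec m → ℝ) (ξhat : Fin N → Vec m) (k : Fin N)
    (x : Vec d) (lam : ℝ) (ξ : Vec m) : ℝ :=
  f x ξ - lam * ‖ξ - ξhat k‖ ^ 2

/-- Centralized objective J(x, λ) := λε² + (1/N) Σ_k sup_ξ g_k(x, λ, ξ), in extended reals. -/
def Jobj {d m N : ℕ} (ε : ℝ) (f : Vec d → Vec m → ℝ) (ξhat : Fin N → Vec m)
    (x : Vec d) (lam : ℝ) : EReal :=
  ((lam * ε ^ 2 : ℝ) : EReal)
    + ((1 / (N : ℝ) : ℝ) : EReal) *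
        ∑ k : Fin N, ⨆ ξ : Vec m, ((gk f ξhat k x lam ξ : ℝ) : EReal)

/-- Distributed objective F(x_v, λ_v), in extended reals. -/
def Fobj {d m n N : ℕ} (ε : ℝ) (f : Vec d → Vec m → ℝ) (ξhat : Fin N → Vec m)
    (v : Fin N → Fin n) (xv : Fin n → Vec d) (lv : Fin n → ℝ) : EReal :=
  ((ε ^ 2 / (n : ℝ) * ∑ i, lv i : ℝ) : EReal)
    + ((1 / (N : ℝ) : ℝ) : EReal) *
        ∑ k : Fin N, ⨆ ξ : Vec m, ((gk f ξhat k (xv (v k)) (lv (v k)) ξ : ℝ) : EReal)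

/-- Feasible set of the distributed problem: λ_v ≥ 0, 𝖫λ_v = 0, (𝖫 ⊗ I_d)x_v = 0. -/
def Feas {d n : ℕ} (Lap : Matrix (Fin n) (Fin n) ℝ) :
    Set ((Fin n → Vec d) × (Fin n → ℝ)) :=
  {p | (∀ i, 0 ≤ p.2 i) ∧ Lap.mulVec p.2 = 0 ∧ ∀ i : Fin n, ∑ j : Fin n, Lap i j • p.1 j = 0}

/-- Lagrangian L(x_v, λ_v, ν, η) := F(x_v, λ_v) + νᵀ𝖫λ_v + ηᵀ(𝖫 ⊗ I_d)x_v. -/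
def Lagr {d m n N : ℕ} (ε : ℝ) (f : Vec d → Vec m → ℝ) (ξhat : Fin N → Vec m)
    (v : Fin N → Fin n) (Lap : Matrix (Fin n) (Fin n) ℝ)
    (xv : Fin n → Vec d) (lv : Fin n → ℝ) (ν : Fin n → ℝ) (η : Fin n → Vec d) : EReal :=
  Fobj ε f ξhat v xv lv
    + ((∑ i, ν i * Lap.mulVec lv i
        + ∑ i, (inner ℝ (η i) (∑ j : Fin n, Lap i j • xv j) : ℝ) : ℝ) : EReal)

/-- Augmented Lagrangian L_aug := L + (1/2)x_vᵀ(𝖫 ⊗ I_d)x_v + (1/2)λ_vᵀ𝖫λ_v. -/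
def LagrAug {d m n N : ℕ} (ε : ℝ) (f : Vec d → Vec m → ℝ) (ξhat : Fin N → Vec m)
    (v : Fin N → Fin n) (Lap : Matrix (Fin n) (Fin n) ℝ)
    (xv : Fin n → Vec d) (lv : Fin n → ℝ) (ν : Fin n → ℝ) (η : Fin n → Vec d) : EReal :=
  Lagr ε f ξhat v Lap xv lv ν η
    + (((1 / 2 : ℝ) * ∑ i, (inner ℝ (xv i) (∑ j : Fin n, Lap i j • xv j) : ℝ)
        + (1 / 2 : ℝ) * ∑ i, lv i * Lap.mulVec lv i : ℝ) : EReal)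

/-- L̃_aug(x_v, λ_v, ν, η, {ξ^k}), real-valued. -/
def Ltld {d m n N : ℕ} (ε : ℝ) (f : Vec d → Vec m → ℝ) (ξhat : Fin N → Vec m)
    (v : Fin N → Fin n) (Lap : Matrix (Fin n) (Fin n) ℝ)
    (xv : Fin n → Vec d) (lv : Fin n → ℝ) (ν : Fin n → ℝ) (η : Fin n → Vec d)
    (ξs : Fin N → Vec m) : ℝ :=
  ε ^ 2 / (n : ℝ) * ∑ i, lv i
    + (1 / (N : ℝ)) * ∑ k : Fin N, gk f ξhat k (xv (v k)) (lv (v k)) (ξs k)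
    + ∑ i, ν i * Lap.mulVec lv i
    + ∑ i, (inner ℝ (η i) (∑ j : Fin n, Lap i j • xv j) : ℝ)
    + (1 / 2 : ℝ) * ∑ i, (inner ℝ (xv i) (∑ j : Fin n, Lap i j • xv j) : ℝ)
    + (1 / 2 : ℝ) * ∑ i, lv i * Lap.mulVec lv i

/-
The feasible set of the distributed problem consists exactly of the consensus points
`(𝟙ₙ ⊗ x, λ𝟙ₙ)` with `λ ≥ 0`: the kernel of `𝖫` is spanned by `𝟙ₙ`, and the kernel of `𝖫 ⊗ I_d`
is `𝟙ₙ ⊗ ℝ^d`, as one sees by applying linear functionals. At a consensus point `F` agrees with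
`J`, since the `n` copies of `λε²/n` add up to `λε²`. So minimizing `F` over the feasible set is
minimizing `J` over `ℝ^d × ℝ_{≥0}`.
-/

open scoped Matrix

section Consensus

variable {ι R V : Type*} [Fintype ι] [CommRing R] [AddCommGroup V] [Module R V]

theorem Matrix.sum_smul_const_eq_zero {L : Matrix ι ι R}
    (hL : L *ᵥ (fun _ => 1) = 0) (c : V) (i : ι) : ∑ j, L i j • c = 0 := by
  have hrow : ∑ j, L i j = 0 := by simpa [Matrix.mulVec, dotProduct] using congrFun hL i
  rw [← Finset.sum_smul, hrow, zero_smul]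

theorem Matrix.eq_of_sum_smul_eq_zero [Module.Projective R V] {L : Matrix ι ι R}
    (hL : ∀ w, L *ᵥ w = 0 → ∃ c : R, w = fun _ => c)
    {x : ι → V} (hx : ∀ i, ∑ j, L i j • x j = 0) (i j : ι) : x i = x j := by
  rw [← sub_eq_zero, ← Module.forall_dual_apply_eq_zero_iff R]
  intro φ
  have hφx : L *ᵥ (fun k => φ (x k)) = 0 := by
    funext k
    simpa [Matrix.mulVec, dotProduct] using congrArg φ (hx k)
  obtain ⟨c, hc⟩ := hL _ hφx
  rw [map_sub, congrFun hc i, congrFun hc j, sub_self]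

end Consensus

theorem const_mem_Feas {d n : ℕ} {Lap : Matrix (Fin n) (Fin n) ℝ}
    (hconst : ∀ c : ℝ, Lap *ᵥ (fun _ => c) = 0) (x : Vec d) {lam : ℝ} (hlam : 0 ≤ lam) :
    ((fun _ => x, fun _ => lam) : (Fin n → Vec d) × (Fin n → ℝ)) ∈ Feas Lap :=
  ⟨fun _ => hlam, hconst lam, Matrix.sum_smul_const_eq_zero (hconst 1) x⟩

theorem exists_const_of_mem_Feas {d n : ℕ} (hn : 0 < n) {Lap : Matrix (Fin n) (Fin n) ℝ}
    (hker : ∀ w, Lap *ᵥ w = 0 → ∃ c : ℝ, w = fun _ => c)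
    {p : (Fin n → Vec d) × (Fin n → ℝ)} (hp : p ∈ Feas Lap) :
    ∃ (x : Vec d) (lam : ℝ), 0 ≤ lam ∧ p = (fun _ => x, fun _ => lam) := by
  obtain ⟨hnonneg, hlker, hxker⟩ := hp
  obtain ⟨lam, hlam⟩ := hker _ hlker
  let i₀ : Fin n := ⟨0, hn⟩
  refine ⟨p.1 i₀, lam, by simpa [hlam] using hnonneg i₀, Prod.ext ?_ hlam⟩
  exact funext fun i => Matrix.eq_of_sum_smul_eq_zero hker hxker i i₀

theorem Fobj_const_eq_Jobj {d m n N : ℕ} (hn : 0 < n) (ε : ℝ) (f : Vec d → Vec m → ℝ)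
    (ξhat : Fin N → Vec m) (v : Fin N → Fin n) (x : Vec d) (lam : ℝ) :
    Fobj ε f ξhat v (fun _ => x) (fun _ => lam) = Jobj ε f ξhat x lam := by
  have hn' : (n : ℝ) ≠ 0 := Nat.cast_ne_zero.mpr hn.ne'
  have hsum : ε ^ 2 / n * ∑ _ : Fin n, lam = lam * ε ^ 2 := by
    rw [Finset.sum_const, Finset.card_univ, Fintype.card_fin, nsmul_eq_mul]
    field_simp
  simp only [Fobj, Jobj, hsum]

theorem distributed_optimizer_gives_centralized_optimizer_general
    {d m n N : ℕ} (hn : 0 < n)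
    (f : Vec d → Vec m → ℝ) (ξhat : Fin N → Vec m) (ε : ℝ)
    (v : Fin N → Fin n)
    (Lap : Matrix (Fin n) (Fin n) ℝ)
    (hLker : ∀ w : Fin n → ℝ, Lap.mulVec w = 0 ↔ ∃ c : ℝ, w = fun _ => c)
    (xvstar : Fin n → Vec d) (lvstar : Fin n → ℝ)
    (hfeas : ((xvstar, lvstar) : (Fin n → Vec d) × (Fin n → ℝ)) ∈ Feas (d := d) Lap)
    (hopt : ∀ p ∈ Feas (d := d) Lap,
      Fobj ε f ξhat v xvstar lvstar ≤ Fobj ε f ξhat v p.1 p.2) :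
    ∃ (xstar : Vec d) (lstar : ℝ), 0 ≤ lstar ∧
      (∀ x : Vec d, ∀ lam : ℝ, 0 ≤ lam →
        Jobj ε f ξhat xstar lstar ≤ Jobj ε f ξhat x lam) ∧
      xvstar = (fun _ => xstar) ∧ lvstar = (fun _ => lstar) := by
  obtain ⟨xstar, lstar, hlstar, hstar⟩ :=
    exists_const_of_mem_Feas hn (fun w => (hLker w).mp) hfeas
  obtain ⟨rfl, rfl⟩ := Prod.ext_iff.mp hstar
  refine ⟨xstar, lstar, hlstar, fun x lam hlam => ?_, rfl, rfl⟩
  have hle := hopt _ (const_mem_Feas (fun c => (hLker _).mpr ⟨c, rfl⟩) x hlam)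
  rwa [Fobj_const_eq_Jobj hn, Fobj_const_eq_Jobj hn] at hle

/-- If (x_v*, λ_v*) minimizes F over the feasible set of the distributed
problem, then there exists (x*, λ*) ∈ ℝ^d × ℝ_{≥0} minimizing J over ℝ^d × ℝ_{≥0} with
x_v* = 𝟙ₙ ⊗ x* and λ_v* = λ*𝟙ₙ. -/
theorem distributed_optimizer_gives_centralized_optimizer
    {d m n N : ℕ} (hn : 0 < n) (hN : 0 < N)
    (f : Vec d → Vec m → ℝ) (ξhat : Fin N → Vec m) (ε : ℝ) (hε : 0 < ε)
    (v : Fin N → Fin n) (hv : Function.Surjective v)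
    (Lap : Matrix (Fin n) (Fin n) ℝ) (hLsym : Lap.IsSymm) (hLpsd : Lap.PosSemidef)
    (hLker : ∀ w : Fin n → ℝ, Lap.mulVec w = 0 ↔ ∃ c : ℝ, w = fun _ => c)
    (xvstar : Fin n → Vec d) (lvstar : Fin n → ℝ)
    (hfeas : ((xvstar, lvstar) : (Fin n → Vec d) × (Fin n → ℝ)) ∈ Feas (d := d) Lap)
    (hopt : ∀ p ∈ Feas (d := d) Lap,
      Fobj ε f ξhat v xvstar lvstar ≤ Fobj ε f ξhat v p.1 p.2) :
    ∃ (xstar : Vec d) (lstar : ℝ), 0 ≤ lstar ∧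
      (∀ x : Vec d, ∀ lam : ℝ, 0 ≤ lam →
        Jobj ε f ξhat xstar lstar ≤ Jobj ε f ξhat x lam) ∧
      xvstar = (fun _ => xstar) ∧ lvstar = (fun _ => lstar) :=
  distributed_optimizer_gives_centralized_optimizer_general hn f ξhat ε v Lap hLker xvstar lvstar
    hfeas hopt

end
end

section
/- The set of saddle points of L over (ℝ^{nd} × ℝ_{≥0}ⁿ) × (ℝⁿ × ℝ^{nd}) is nonempty, and inf over (x_v, λ_v) with λ_v ≥ 0 of sup over (ν, η) of L(x_v, λ_v, ν, η) equals sup over (ν, η) of inf over (x_v, λ_v) with λ_v ≥ 0 of L(x_v, λ_v, ν, η), with both sides taken in the extended reals. -/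
/-!
The saddle point is the consensus copy `(xs, …, xs; ls, …, ls)` of a minimiser of `J`, at
which `F` equals `J` and the coupling terms vanish. The multipliers `(ν, η)` come from strong
duality for the convex problem "minimise `F` subject to `(𝖫 ⊗ I_d) x_v = 0`, `𝖫 λ_v = 0`,
`λ_v ≥ 0`": Slater's condition holds at the consensus copy of an interior point of `dom J`, so
separating the strict epigraph of `F` from `ker × (-∞, J*]` yields a functional vanishing on the
kernel, which factors through the constraint map because the range of the dual map is the
annihilator of the kernel. Given a saddle point, min-max equals max-min in any complete lattice.
-/

open scoped BigOperators RealInnerProductSpace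
open Finset

noncomputable section

/-- A saddle point of the Lagrangian L over (ℝ^{nd} × ℝ_{≥0}ⁿ) × (ℝⁿ × ℝ^{nd}). -/
def IsSaddleLagr {d m n N : ℕ} (ε : ℝ) (f : Vec d → Vec m → ℝ) (ξhat : Fin N → Vec m)
    (v : Fin N → Fin n) (Lap : Matrix (Fin n) (Fin n) ℝ)
    (xv : Fin n → Vec d) (lv : Fin n → ℝ) (ν : Fin n → ℝ) (η : Fin n → Vec d) : Prop :=
  (∀ i, 0 ≤ lv i) ∧
  (∀ (ν' : Fin n → ℝ) (η' : Fin n → Vec d),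
    Lagr ε f ξhat v Lap xv lv ν' η' ≤ Lagr ε f ξhat v Lap xv lv ν η) ∧
  (∀ (xv' : Fin n → Vec d) (lv' : Fin n → ℝ), (∀ i, 0 ≤ lv' i) →
    Lagr ε f ξhat v Lap xv lv ν η ≤ Lagr ε f ξhat v Lap xv' lv' ν η)

section StrongDuality

variable {E : Type*} [NormedAddCommGroup E] [NormedSpace ℝ E] [FiniteDimensional ℝ E]
  {D : Set E} {F : E → ℝ}

theorem ConvexOn.mem_interior_strict_epigraph (hF : ConvexOn ℝ D F) {z : E} {r : ℝ}
    (hz : z ∈ interior D) (hr : F z < r) :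
    (z, r) ∈ interior {q : E × ℝ | q.1 ∈ D ∧ F q.1 < q.2} := by
  have hopen : IsOpen ((interior D ×ˢ Set.univ) ∩
      (fun q : E × ℝ => q.2 - F q.1) ⁻¹' Set.Ioi 0) :=
    ContinuousOn.isOpen_inter_preimage
      (continuousOn_snd.sub (hF.continuousOn_interior.comp continuousOn_fst fun _ h => h.1))
      (isOpen_interior.prod isOpen_univ) isOpen_Ioi
  refine interior_maximal ?_ hopen ⟨⟨hz, Set.mem_univ _⟩, by simpa [sub_pos] using hr⟩
  rintro q ⟨⟨hq, -⟩, hq'⟩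
  exact ⟨interior_subset hq, by simpa [sub_pos] using hq'⟩

theorem ConvexOn.exists_forall_le_add_of_slater (hF : ConvexOn ℝ D F) {C : Submodule ℝ E}
    {z₀ : E} (hz₀D : z₀ ∈ interior D) (hz₀C : z₀ ∈ C) {p : ℝ}
    (hp : ∀ z ∈ D, z ∈ C → p ≤ F z) :
    ∃ ψ : StrongDual ℝ E, (∀ c ∈ C, ψ c = 0) ∧ ∀ z ∈ D, p ≤ F z + ψ z := by
  -- Separate the strict epigraph from `C × (-∞, p]` by `(z, r) ↦ φ z + r β`; the Slater point
  -- forces `β < 0`, and `ψ := β⁻¹ φ`.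
  set epi := {q : E × ℝ | q.1 ∈ D ∧ F q.1 < q.2}
  have hdisj : Disjoint (interior epi) ((C : Set E) ×ˢ Set.Iic p) :=
    Set.disjoint_left.2 fun q hq hq' =>
      (hp q.1 (interior_subset hq).1 hq'.1).not_gt ((interior_subset hq).2.trans_le hq'.2)
  obtain ⟨f, u, hf_int, hf_low⟩ := geometric_hahn_banach_open hF.convex_strict_epigraph.interior
    isOpen_interior (C.convex.prod (convex_Iic p)) hdisj
  have hz₀epi := hF.mem_interior_strict_epigraph hz₀D (lt_add_one (F z₀))
  have hf_epi : ∀ q ∈ epi, f q ≤ u := fun q hq => by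
    have hcl : closure (interior epi) ⊆ {q | f q ≤ u} :=
      closure_minimal (fun q hq => (hf_int q hq).le) (isClosed_le f.continuous continuous_const)
    rw [hF.convex_strict_epigraph.closure_interior_eq_closure_of_nonempty_interior
      ⟨_, hz₀epi⟩] at hcl
    exact hcl (subset_closure hq)
  set φ := f.comp (ContinuousLinearMap.inl ℝ E ℝ)
  set β := f (0, 1)
  have hf_eq : ∀ z r, f (z, r) = φ z + r * β := fun z r => by
    rw [show ((z, r) : E × ℝ) = (z, 0) + r • (0, 1) by simp, map_add, map_smul, smul_eq_mul]
    rfl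
  have hφC : ∀ c ∈ C, φ c = 0 := by
    intro c hc
    by_contra hne
    have := hf_low (((u - p * β - 1) / φ c) • c, p) ⟨C.smul_mem _ hc, le_refl p⟩
    rw [hf_eq, map_smul, smul_eq_mul, div_mul_cancel₀ _ hne] at this
    linarith
  have hβ : β < 0 := by
    have h₁ := hf_int _ hz₀epi
    have h₂ := hf_low (z₀, p) ⟨hz₀C, le_refl p⟩
    rw [hf_eq, hφC z₀ hz₀C] at h₁ h₂
    nlinarith [hp z₀ (interior_subset hz₀D) hz₀C]
  refine ⟨β⁻¹ • φ, fun c hc => by simp [hφC c hc], fun z hz => ?_⟩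
  rw [← sub_le_iff_le_add]
  refine le_of_forall_gt_imp_ge_of_dense fun r hr => ?_
  have h₁ := hf_epi (z, r) ⟨hz, hr⟩
  have h₂ := hf_low (0, p) ⟨C.zero_mem, le_refl p⟩
  rw [hf_eq] at h₁
  rw [hf_eq, map_zero] at h₂
  have : p - r ≤ φ z / β := (le_div_iff_of_neg hβ).2 (by linarith)
  change p - β⁻¹ * φ z ≤ r
  linarith [div_eq_inv_mul (φ z) β]

theorem ConvexOn.exists_lagrange_multiplier_of_slater {W : Type*} [AddCommGroup W] [Module ℝ W]
    (hF : ConvexOn ℝ D F) (A : E →ₗ[ℝ] W) {z₀ : E} (hz₀D : z₀ ∈ interior D) (hAz₀ : A z₀ = 0)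
    {p : ℝ} (hp : ∀ z ∈ D, A z = 0 → p ≤ F z) :
    ∃ μ : Module.Dual ℝ W, ∀ z ∈ D, p ≤ F z + μ (A z) := by
  obtain ⟨ψ, hψ_ker, hψ⟩ := hF.exists_forall_le_add_of_slater (C := LinearMap.ker A) hz₀D hAz₀ hp
  have : (ψ : Module.Dual ℝ E) ∈ LinearMap.range A.dualMap := by
    rw [LinearMap.range_dualMap_eq_dualAnnihilator_ker, Submodule.mem_dualAnnihilator]
    exact hψ_ker
  obtain ⟨μ, hμ⟩ := this
  exact ⟨μ, fun z hz => by simpa [← LinearMap.dualMap_apply, hμ] using hψ z hz⟩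

end StrongDuality

theorem iInf_iSup_eq_iSup_iInf_of_isSaddle {α β γ : Type*} [CompleteLattice γ] {Φ : α → β → γ}
    {X : Set α} {x₀ : α} {y₀ : β} (hx₀ : x₀ ∈ X) (hmax : ∀ y, Φ x₀ y ≤ Φ x₀ y₀)
    (hmin : ∀ x ∈ X, Φ x₀ y₀ ≤ Φ x y₀) :
    ⨅ x ∈ X, ⨆ y, Φ x y = ⨆ y, ⨅ x ∈ X, Φ x y := by
  refine le_antisymm ?_ (iSup_le fun y => le_iInf₂ fun x hx => iInf₂_le_of_le x hx (le_iSup _ y))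
  calc ⨅ x ∈ X, ⨆ y, Φ x y ≤ ⨆ y, Φ x₀ y := iInf₂_le x₀ hx₀
    _ ≤ ⨅ x ∈ X, Φ x y₀ := iSup_le fun y => (hmax y).trans (le_iInf₂ hmin)
    _ ≤ ⨆ y, ⨅ x ∈ X, Φ x y := le_iSup (fun y => ⨅ x ∈ X, Φ x y) y₀

theorem exists_dual_eq_sum_mul_add_sum_inner {ι E : Type*} [Fintype ι]
    [NormedAddCommGroup E] [InnerProductSpace ℝ E] [FiniteDimensional ℝ E]
    (μ : Module.Dual ℝ ((ι → E) × (ι → ℝ))) :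
    ∃ (ν : ι → ℝ) (η : ι → E), ∀ w, μ w = ∑ i, ν i * w.2 i + ∑ i, ⟪η i, w.1 i⟫ := by
  classical
  set μ₁ := μ ∘ₗ LinearMap.inl ℝ (ι → E) (ι → ℝ)
  set μ₂ := μ ∘ₗ LinearMap.inr ℝ (ι → E) (ι → ℝ)
  refine ⟨fun i => μ₂ (Pi.single i 1), fun i => (InnerProductSpace.toDual ℝ E).symm
    (LinearMap.toContinuousLinearMap (μ₁ ∘ₗ LinearMap.single ℝ (fun _ => E) i)), fun w => ?_⟩
  have h₁ : μ₁ w.1 = ∑ i, μ₁ (Pi.single i (w.1 i)) := by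
    conv_lhs => rw [← Finset.univ_sum_single w.1]
    exact map_sum μ₁ _ _
  have h₂ : μ₂ w.2 = ∑ i, μ₂ (Pi.single i 1) * w.2 i := by
    conv_lhs => rw [← Finset.univ_sum_single w.2]
    rw [map_sum]
    refine Finset.sum_congr rfl fun i _ => ?_
    rw [mul_comm, ← smul_eq_mul, ← map_smul, ← Pi.single_smul', smul_eq_mul, mul_one]
  calc μ w = μ₂ w.2 + μ₁ w.1 := by
        change μ w = μ (0, w.2) + μ (w.1, 0)
        rw [← map_add]
        simp
    _ = _ := by
        rw [h₁, h₂]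
        simp [InnerProductSpace.toDual_symm_apply]

theorem EReal.coe_finset_sum {ι : Type*} (s : Finset ι) (g : ι → ℝ) :
    ((∑ i ∈ s, g i : ℝ) : EReal) = ∑ i ∈ s, (g i : EReal) :=
  map_sum (⟨⟨(↑), EReal.coe_zero⟩, EReal.coe_add⟩ : ℝ →+ EReal) g s

theorem EReal.sum_eq_top_of_ne_bot {ι : Type*} {s : Finset ι} {g : ι → EReal}
    (hbot : ∀ i ∈ s, g i ≠ ⊥) {i : ι} (hi : i ∈ s) (htop : g i = ⊤) : ∑ j ∈ s, g j = ⊤ := by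
  classical
  rw [← Finset.add_sum_erase s g hi, htop, EReal.top_add_of_ne_bot]
  exact Finset.sum_induction _ (· ≠ ⊥) (fun a b ha hb => EReal.add_ne_bot_iff.2 ⟨ha, hb⟩)
    EReal.zero_ne_bot fun j hj => hbot j (Finset.mem_of_mem_erase hj)

namespace DistributedDRO

variable {d m n N : ℕ} {f : Vec d → Vec m → ℝ} {ξhat : Fin N → Vec m}

def supGk (f : Vec d → Vec m → ℝ) (ξhat : Fin N → Vec m) (k : Fin N) (x : Vec d) (lam : ℝ) :
    EReal :=
  ⨆ ξ : Vec m, ((gk f ξhat k x lam ξ : ℝ) : EReal)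

theorem supGk_ne_bot (k : Fin N) (x : Vec d) (lam : ℝ) : supGk f ξhat k x lam ≠ ⊥ :=
  ne_bot_of_le_ne_bot (EReal.coe_ne_bot _)
    (le_iSup (fun ξ => ((gk f ξhat k x lam ξ : ℝ) : EReal)) (ξhat k))

theorem supGk_convex_comb_le (hconv : ∀ ξ : Vec m, ConvexOn ℝ Set.univ (fun x => f x ξ))
    (k : Fin N) {x₁ x₂ : Vec d} {l₁ l₂ a b c₁ c₂ : ℝ} (ha : 0 ≤ a) (hb : 0 ≤ b) (hab : a + b = 1)
    (h₁ : supGk f ξhat k x₁ l₁ ≤ c₁) (h₂ : supGk f ξhat k x₂ l₂ ≤ c₂) :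
    supGk f ξhat k (a • x₁ + b • x₂) (a * l₁ + b * l₂) ≤ ((a * c₁ + b * c₂ : ℝ) : EReal) := by
  refine iSup_le fun ξ => EReal.coe_le_coe_iff.2 ?_
  have hg₁ : gk f ξhat k x₁ l₁ ξ ≤ c₁ := EReal.coe_le_coe_iff.1 ((le_iSup _ ξ).trans h₁)
  have hg₂ : gk f ξhat k x₂ l₂ ξ ≤ c₂ := EReal.coe_le_coe_iff.1 ((le_iSup _ ξ).trans h₂)
  have hf := (hconv ξ).2 (Set.mem_univ x₁) (Set.mem_univ x₂) ha hb hab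
  simp only [gk, smul_eq_mul] at hf hg₁ hg₂ ⊢
  linarith [mul_le_mul_of_nonneg_left hg₁ ha, mul_le_mul_of_nonneg_left hg₂ hb]

def domF (f : Vec d → Vec m → ℝ) (ξhat : Fin N → Vec m) (v : Fin N → Fin n) :
    Set ((Fin n → Vec d) × (Fin n → ℝ)) :=
  {z | (∀ i, 0 ≤ z.2 i) ∧ ∀ k, supGk f ξhat k (z.1 (v k)) (z.2 (v k)) ≠ ⊤}

-- On `domF` this is `Fobj`; off it `Fobj = ⊤` and the `toReal` terms are junk.
def realF (ε : ℝ) (f : Vec d → Vec m → ℝ) (ξhat : Fin N → Vec m) (v : Fin N → Fin n)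
    (z : (Fin n → Vec d) × (Fin n → ℝ)) : ℝ :=
  ε ^ 2 / n * ∑ i, z.2 i + 1 / N * ∑ k, (supGk f ξhat k (z.1 (v k)) (z.2 (v k))).toReal

theorem Fobj_eq_realF (ε : ℝ) (v : Fin N → Fin n) {xv : Fin n → Vec d} {lv : Fin n → ℝ}
    (h : ∀ k, supGk f ξhat k (xv (v k)) (lv (v k)) ≠ ⊤) :
    Fobj ε f ξhat v xv lv = realF ε f ξhat v (xv, lv) := by
  change _ + _ * ∑ k, supGk f ξhat k (xv (v k)) (lv (v k)) = _
  rw [Finset.sum_congr rfl fun k _ => (EReal.coe_toReal (h k) (supGk_ne_bot _ _ _)).symm,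
    ← EReal.coe_finset_sum, ← EReal.coe_mul, ← EReal.coe_add]
  rfl

theorem Fobj_eq_top (hN : 0 < N) (ε : ℝ) (v : Fin N → Fin n) {xv : Fin n → Vec d}
    {lv : Fin n → ℝ} {k : Fin N} (h : supGk f ξhat k (xv (v k)) (lv (v k)) = ⊤) :
    Fobj ε f ξhat v xv lv = ⊤ := by
  change _ + _ * ∑ k, supGk f ξhat k (xv (v k)) (lv (v k)) = ⊤
  rw [EReal.sum_eq_top_of_ne_bot (g := fun k => supGk f ξhat k (xv (v k)) (lv (v k)))
    (fun k _ => supGk_ne_bot _ _ _) (Finset.mem_univ k) h,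
    EReal.coe_mul_top_of_pos (by positivity), EReal.coe_add_top]

theorem Fobj_ne_bot (hN : 0 < N) (ε : ℝ) (v : Fin N → Fin n) (xv : Fin n → Vec d)
    (lv : Fin n → ℝ) : Fobj ε f ξhat v xv lv ≠ ⊥ := by
  by_cases h : ∀ k, supGk f ξhat k (xv (v k)) (lv (v k)) ≠ ⊤
  · rw [Fobj_eq_realF ε v h]
    exact EReal.coe_ne_bot _
  · obtain ⟨k, hk⟩ := not_forall_not.1 h
    rw [Fobj_eq_top hN ε v hk]
    exact top_ne_bot

theorem Fobj_const (hn : 0 < n) (ε : ℝ) (v : Fin N → Fin n) (x : Vec d) (lam : ℝ) :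
    Fobj ε f ξhat v (fun _ => x) (fun _ => lam) = Jobj ε f ξhat x lam := by
  simp only [Fobj, Jobj, Finset.sum_const, Finset.card_univ, Fintype.card_fin, nsmul_eq_mul]
  congr 2
  field_simp

theorem convexOn_realF (hconv : ∀ ξ : Vec m, ConvexOn ℝ Set.univ (fun x => f x ξ)) (ε : ℝ)
    (v : Fin N → Fin n) : ConvexOn ℝ (domF f ξhat v) (realF ε f ξhat v) := by
  have hcombo : ∀ z₁ ∈ domF f ξhat v, ∀ z₂ ∈ domF f ξhat v, ∀ a b : ℝ, 0 ≤ a → 0 ≤ b →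
      a + b = 1 → ∀ k, supGk f ξhat k ((a • z₁ + b • z₂).1 (v k)) ((a • z₁ + b • z₂).2 (v k))
        ≤ ((a * (supGk f ξhat k (z₁.1 (v k)) (z₁.2 (v k))).toReal
          + b * (supGk f ξhat k (z₂.1 (v k)) (z₂.2 (v k))).toReal : ℝ) : EReal) :=
    fun z₁ h₁ z₂ h₂ a b ha hb hab k => supGk_convex_comb_le hconv k ha hb hab
      (EReal.le_coe_toReal (h₁.2 k)) (EReal.le_coe_toReal (h₂.2 k))
  refine ⟨fun z₁ h₁ z₂ h₂ a b ha hb hab => ⟨fun i => ?_, fun k => ?_⟩,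
    fun z₁ h₁ z₂ h₂ a b ha hb hab => ?_⟩
  · exact add_nonneg (mul_nonneg ha (h₁.1 i)) (mul_nonneg hb (h₂.1 i))
  · exact ne_top_of_le_ne_top (EReal.coe_ne_top _) (hcombo z₁ h₁ z₂ h₂ a b ha hb hab k)
  · have hk := fun k => EReal.toReal_le_toReal (hcombo z₁ h₁ z₂ h₂ a b ha hb hab k)
      (supGk_ne_bot _ _ _) (EReal.coe_ne_top _)
    simp only [EReal.toReal_coe] at hk
    have hsum := mul_le_mul_of_nonneg_left (Finset.sum_le_sum (s := Finset.univ) fun k _ => hk k)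
      (by positivity : (0 : ℝ) ≤ 1 / N)
    simp only [realF, smul_eq_mul, Prod.fst_add, Prod.snd_add, Prod.smul_fst, Prod.smul_snd,
      Pi.add_apply, Pi.smul_apply] at hsum ⊢
    simp only [Finset.sum_add_distrib, ← Finset.mul_sum] at hsum ⊢
    linarith

theorem const_mem_interior_domF (hn : 0 < n) (hN : 0 < N) (ε : ℝ) (v : Fin N → Fin n)
    {p₀ : Vec d × ℝ}
    (hp₀ : p₀ ∈ interior {p : Vec d × ℝ | 0 ≤ p.2 ∧ ∃ r : ℝ, Jobj ε f ξhat p.1 p.2 = r}) :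
    ((fun _ => p₀.1, fun _ => p₀.2) : (Fin n → Vec d) × (Fin n → ℝ))
      ∈ interior (domF f ξhat v) := by
  set S := {p : Vec d × ℝ | 0 ≤ p.2 ∧ ∃ r : ℝ, Jobj ε f ξhat p.1 p.2 = r}
  have hS : ∀ q ∈ S, 0 ≤ q.2 ∧ ∀ k, supGk f ξhat k q.1 q.2 ≠ ⊤ := by
    rintro q ⟨hq, r, hr⟩
    refine ⟨hq, fun k hk => EReal.coe_ne_top r ?_⟩
    rw [← hr, ← Fobj_const hn ε v]
    exact Fobj_eq_top hN ε v (k := k) hk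
  have hopen : IsOpen (⋂ i : Fin n, (fun z : (Fin n → Vec d) × (Fin n → ℝ) => (z.1 i, z.2 i)) ⁻¹'
      interior S) :=
    isOpen_iInter_of_finite fun i => isOpen_interior.preimage (by fun_prop)
  refine interior_maximal (fun z hz => ?_) hopen (Set.mem_iInter.2 fun _ => hp₀)
  rw [Set.mem_iInter] at hz
  exact ⟨fun i => (hS _ (interior_subset (hz i))).1,
    fun k => (hS _ (interior_subset (hz (v k)))).2 k⟩

-- `(x_v, λ_v) ↦ ((𝖫 ⊗ I_d) x_v, 𝖫 λ_v)`
def laplacianMap (Lap : Matrix (Fin n) (Fin n) ℝ) :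
    (Fin n → Vec d) × (Fin n → ℝ) →ₗ[ℝ] (Fin n → Vec d) × (Fin n → ℝ) :=
  (LinearMap.pi fun i => ∑ j, Lap i j • LinearMap.proj j).prodMap Lap.mulVecLin

theorem laplacianMap_apply (Lap : Matrix (Fin n) (Fin n) ℝ) (xv : Fin n → Vec d)
    (lv : Fin n → ℝ) :
    laplacianMap Lap (xv, lv) = (fun i => ∑ j, Lap i j • xv j, Lap.mulVec lv) := by
  ext <;> simp [laplacianMap]

theorem laplacianMap_eq_zero_iff {Lap : Matrix (Fin n) (Fin n) ℝ}
    (hLker : ∀ w : Fin n → ℝ, Lap.mulVec w = 0 ↔ ∃ c : ℝ, w = fun _ => c)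
    (z : (Fin n → Vec d) × (Fin n → ℝ)) :
    laplacianMap Lap z = 0 ↔ ∃ (x : Vec d) (c : ℝ), z = (fun _ => x, fun _ => c) := by
  obtain ⟨xv, lv⟩ := z
  have hrow : ∀ i, ∑ j, Lap i j = 0 := fun i => by
    simpa [Matrix.mulVec, dotProduct] using congrFun ((hLker fun _ => 1).2 ⟨1, rfl⟩) i
  rw [laplacianMap_apply, Prod.mk_eq_zero]
  constructor
  · rintro ⟨hx, hl⟩
    obtain ⟨c, rfl⟩ := (hLker lv).1 hl
    have hcoord : ∀ a : Fin d, ∃ t : ℝ, (fun j => xv j a) = fun _ => t := by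
      refine fun a => (hLker _).1 (funext fun i => ?_)
      simpa [Matrix.mulVec, dotProduct] using congrArg (fun y : Vec d => y a) (congrFun hx i)
    choose t ht using hcoord
    exact ⟨WithLp.toLp 2 t, c, Prod.ext (funext fun j => by ext a; exact congrFun (ht a) j) rfl⟩
  · rintro ⟨x, c, h⟩
    obtain ⟨rfl, rfl⟩ := Prod.mk.inj h
    exact ⟨funext fun i => by simp [← Finset.sum_smul, hrow i], (hLker _).2 ⟨c, rfl⟩⟩

theorem Lagr_eq_Fobj_add (ε : ℝ) (v : Fin N → Fin n) (Lap : Matrix (Fin n) (Fin n) ℝ)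
    (xv : Fin n → Vec d) (lv : Fin n → ℝ) (ν : Fin n → ℝ) (η : Fin n → Vec d) :
    Lagr ε f ξhat v Lap xv lv ν η = Fobj ε f ξhat v xv lv
      + ((∑ i, ν i * (laplacianMap Lap (xv, lv)).2 i
          + ∑ i, ⟪η i, (laplacianMap Lap (xv, lv)).1 i⟫ : ℝ) : EReal) := by
  rw [laplacianMap_apply]
  rfl

theorem Lagr_const (hn : 0 < n) (ε : ℝ) (v : Fin N → Fin n) {Lap : Matrix (Fin n) (Fin n) ℝ}
    (hLker : ∀ w : Fin n → ℝ, Lap.mulVec w = 0 ↔ ∃ c : ℝ, w = fun _ => c)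
    (x : Vec d) (lam : ℝ) (ν : Fin n → ℝ) (η : Fin n → Vec d) :
    Lagr ε f ξhat v Lap (fun _ => x) (fun _ => lam) ν η = Jobj ε f ξhat x lam := by
  rw [Lagr_eq_Fobj_add, (laplacianMap_eq_zero_iff hLker _).2 ⟨x, lam, rfl⟩, Fobj_const hn]
  simp

theorem exists_multipliers_Jobj_le_Lagr (hn : 0 < n) (hN : 0 < N) (ε : ℝ)
    (hconv : ∀ ξ : Vec m, ConvexOn ℝ Set.univ (fun x => f x ξ)) (v : Fin N → Fin n)
    {Lap : Matrix (Fin n) (Fin n) ℝ}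
    (hLker : ∀ w : Fin n → ℝ, Lap.mulVec w = 0 ↔ ∃ c : ℝ, w = fun _ => c)
    (hfin : (interior {p : Vec d × ℝ |
        0 ≤ p.2 ∧ ∃ r : ℝ, Jobj ε f ξhat p.1 p.2 = (r : EReal)}).Nonempty)
    {xs : Vec d} {ls : ℝ}
    (hmin : ∀ x : Vec d, ∀ lam : ℝ, 0 ≤ lam → Jobj ε f ξhat xs ls ≤ Jobj ε f ξhat x lam) :
    ∃ (ν : Fin n → ℝ) (η : Fin n → Vec d), ∀ (xv : Fin n → Vec d) (lv : Fin n → ℝ),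
      (∀ i, 0 ≤ lv i) → Jobj ε f ξhat xs ls ≤ Lagr ε f ξhat v Lap xv lv ν η := by
  obtain ⟨p₀, hp₀⟩ := hfin
  obtain ⟨r₀, hr₀⟩ := (interior_subset hp₀).2
  have hJ_ne_top : Jobj ε f ξhat xs ls ≠ ⊤ :=
    ne_top_of_le_ne_top (EReal.coe_ne_top r₀) (hr₀ ▸ hmin p₀.1 p₀.2 (interior_subset hp₀).1)
  have hJ_ne_bot : Jobj ε f ξhat xs ls ≠ ⊥ := Fobj_const hn ε v xs ls ▸ Fobj_ne_bot hN ε v _ _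
  obtain ⟨p, hp⟩ : ∃ p : ℝ, Jobj ε f ξhat xs ls = p :=
    ⟨_, (EReal.coe_toReal hJ_ne_top hJ_ne_bot).symm⟩
  obtain ⟨μ, hμ⟩ := (convexOn_realF hconv ε v).exists_lagrange_multiplier_of_slater
    (laplacianMap Lap) (const_mem_interior_domF hn hN ε v hp₀)
    ((laplacianMap_eq_zero_iff hLker _).2 ⟨_, _, rfl⟩) (p := p) fun z hz hAz => by
      obtain ⟨x, c, rfl⟩ := (laplacianMap_eq_zero_iff hLker z).1 hAz
      have := hmin x c (hz.1 ⟨0, hn⟩)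
      rwa [hp, ← Fobj_const hn ε v, Fobj_eq_realF ε v hz.2, EReal.coe_le_coe_iff] at this
  obtain ⟨ν, η, hνη⟩ := exists_dual_eq_sum_mul_add_sum_inner μ
  refine ⟨ν, η, fun xv lv hlv => ?_⟩
  by_cases hdom : ∀ k, supGk f ξhat k (xv (v k)) (lv (v k)) ≠ ⊤
  · rw [Lagr_eq_Fobj_add, Fobj_eq_realF ε v hdom, ← hνη, hp, ← EReal.coe_add, EReal.coe_le_coe_iff]
    exact hμ (xv, lv) ⟨hlv, hdom⟩
  · obtain ⟨k, hk⟩ := not_forall_not.1 hdom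
    rw [Lagr_eq_Fobj_add, Fobj_eq_top hN ε v hk, EReal.top_add_coe]
    exact le_top

end DistributedDRO

theorem lagrangian_saddle_exists_and_minmax_eq_maxmin_general
    {d m n N : ℕ} (hn : 0 < n) (hN : 0 < N)
    (f : Vec d → Vec m → ℝ) (ξhat : Fin N → Vec m) (ε : ℝ)
    (hconv : ∀ ξ : Vec m, ConvexOn ℝ Set.univ (fun x => f x ξ))
    (v : Fin N → Fin n)
    (Lap : Matrix (Fin n) (Fin n) ℝ)
    (hLker : ∀ w : Fin n → ℝ, Lap.mulVec w = 0 ↔ ∃ c : ℝ, w = fun _ => c)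
    (hfin : (interior {p : Vec d × ℝ |
        0 ≤ p.2 ∧ ∃ r : ℝ, Jobj ε f ξhat p.1 p.2 = (r : EReal)}).Nonempty)
    (hopt : ∃ (xs : Vec d) (ls : ℝ), 0 ≤ ls ∧ ∀ x : Vec d, ∀ lam : ℝ, 0 ≤ lam →
      Jobj ε f ξhat xs ls ≤ Jobj ε f ξhat x lam) :
    (∃ (xv : Fin n → Vec d) (lv : Fin n → ℝ) (ν : Fin n → ℝ) (η : Fin n → Vec d),
        IsSaddleLagr ε f ξhat v Lap xv lv ν η) ∧
    (⨅ xv : Fin n → Vec d, ⨅ lv ∈ {lv : Fin n → ℝ | ∀ i, 0 ≤ lv i},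
        ⨆ ν : Fin n → ℝ, ⨆ η : Fin n → Vec d, Lagr ε f ξhat v Lap xv lv ν η)
      = ⨆ ν : Fin n → ℝ, ⨆ η : Fin n → Vec d,
          ⨅ xv : Fin n → Vec d, ⨅ lv ∈ {lv : Fin n → ℝ | ∀ i, 0 ≤ lv i},
            Lagr ε f ξhat v Lap xv lv ν η := by
  obtain ⟨xs, ls, hls, hmin⟩ := hopt
  obtain ⟨ν, η, hmult⟩ :=
    DistributedDRO.exists_multipliers_Jobj_le_Lagr hn hN ε hconv v hLker hfin hmin
  have hconst := DistributedDRO.Lagr_const (f := f) (ξhat := ξhat) hn ε v hLker xs ls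
  have hsaddle : IsSaddleLagr ε f ξhat v Lap (fun _ => xs) (fun _ => ls) ν η :=
    ⟨fun _ => hls, fun ν' η' => ((hconst ν' η').trans (hconst ν η).symm).le,
      fun xv lv hlv => (hconst ν η).trans_le (hmult xv lv hlv)⟩
  refine ⟨⟨_, _, ν, η, hsaddle⟩, ?_⟩
  have := iInf_iSup_eq_iSup_iInf_of_isSaddle
    (Φ := fun (z : (Fin n → Vec d) × (Fin n → ℝ)) (w : (Fin n → ℝ) × (Fin n → Vec d)) =>
      Lagr ε f ξhat v Lap z.1 z.2 w.1 w.2)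
    (X := {z | ∀ i, 0 ≤ z.2 i}) (x₀ := (fun _ => xs, fun _ => ls)) (y₀ := (ν, η))
    hsaddle.1 (fun w => hsaddle.2.1 w.1 w.2)
    (fun z hz => hsaddle.2.2 z.1 z.2 hz)
  simp only [iInf_prod, iSup_prod] at this
  exact this

/-- The set of saddle points of L is nonempty and the min-max equals
the max-min for L, in the extended reals. -/
theorem lagrangian_saddle_exists_and_minmax_eq_maxmin
    {d m n N : ℕ} (hn : 0 < n) (hN : 0 < N)
    (f : Vec d → Vec m → ℝ) (ξhat : Fin N → Vec m) (ε : ℝ) (hε : 0 < ε)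
    (hf : ContDiff ℝ 1 (Function.uncurry f))
    (hconv : ∀ ξ : Vec m, ConvexOn ℝ Set.univ (fun x => f x ξ))
    (v : Fin N → Fin n) (hv : Function.Surjective v)
    (Lap : Matrix (Fin n) (Fin n) ℝ) (hLsym : Lap.IsSymm) (hLpsd : Lap.PosSemidef)
    (hLker : ∀ w : Fin n → ℝ, Lap.mulVec w = 0 ↔ ∃ c : ℝ, w = fun _ => c)
    (hfin : (interior {p : Vec d × ℝ |
        0 ≤ p.2 ∧ ∃ r : ℝ, Jobj ε f ξhat p.1 p.2 = (r : EReal)}).Nonempty)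
    (hopt : ∃ (xs : Vec d) (ls : ℝ), 0 ≤ ls ∧ ∀ x : Vec d, ∀ lam : ℝ, 0 ≤ lam →
      Jobj ε f ξhat xs ls ≤ Jobj ε f ξhat x lam) :
    (∃ (xv : Fin n → Vec d) (lv : Fin n → ℝ) (ν : Fin n → ℝ) (η : Fin n → Vec d),
        IsSaddleLagr ε f ξhat v Lap xv lv ν η) ∧
    (⨅ xv : Fin n → Vec d, ⨅ lv ∈ {lv : Fin n → ℝ | ∀ i, 0 ≤ lv i},
        ⨆ ν : Fin n → ℝ, ⨆ η : Fin n → Vec d, Lagr ε f ξhat v Lap xv lv ν η)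
      = ⨆ ν : Fin n → ℝ, ⨆ η : Fin n → Vec d,
          ⨅ xv : Fin n → Vec d, ⨅ lv ∈ {lv : Fin n → ℝ | ∀ i, 0 ≤ lv i},
            Lagr ε f ξhat v Lap xv lv ν η :=
  lagrangian_saddle_exists_and_minmax_eq_maxmin_general hn hN f ξhat ε hconv v Lap hLker hfin hopt

end
end

section
/- (i) If (x̄_v, λ̄_v, ν̄, η̄) is a saddle point of L over (ℝ^{nd} × ℝ_{≥0}ⁿ) × (ℝⁿ × ℝ^{nd}), then (x̄_v, λ̄_v) minimizes F over the feasible set of the distributed problem. (ii) If (x̄_v, λ̄_v) minimizes F over the feasible set of the distributed problem, then there exists (ν̄, η̄) ∈ ℝⁿ × ℝ^{nd} such that (x̄_v, λ̄_v, ν̄, η̄) is a saddle point of L over (ℝ^{nd} × ℝ_{≥0}ⁿ) × (ℝⁿ × ℝ^{nd}). -/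
open scoped BigOperators RealInnerProductSpace
open Finset

noncomputable section

/-! The distributed problem is a convex program whose only constraints besides `λ ≥ 0` are the
linear consensus constraints `A z = 0`, `A = (𝖫 ⊗ I_d, 𝖫)`, and `L` is its Lagrangian for them.
At a saddle point `L` is bounded above in the multipliers while linear in them, so `A z = 0`;
on feasible points `L = F`, so the other saddle inequality is minimality. Conversely, the
consensus copy of an interior point of the finiteness domain of `J` is a Slater point, and
separating `{(A z, t) | F z < t}` from `(0, min F)` by Hahn–Banach gives a non-vertical
hyperplane whose slope is the multiplier `(ν, η)`. -/

open Set

section LagrangeMultiplier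

variable {E F : Type*} [NormedAddCommGroup E] [NormedSpace ℝ E]

theorem Convex.exists_le_of_forall_interior_lt {S : Set E} {x : E} (hS : Convex ℝ S)
    (hint : (interior S).Nonempty) (hx : x ∉ interior S) :
    ∃ ℓ : StrongDual ℝ E, (∀ a ∈ S, ℓ a ≤ ℓ x) ∧ ∀ a ∈ interior S, ℓ a < ℓ x := by
  obtain ⟨ℓ, hℓ⟩ := geometric_hahn_banach_open_point hS.interior isOpen_interior hx
  refine ⟨ℓ, fun a ha => ?_, hℓ⟩
  have hclosure : closure (interior S) ⊆ {a | ℓ a ≤ ℓ x} :=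
    closure_minimal (fun a ha => (hℓ a ha).le) (isClosed_le ℓ.continuous continuous_const)
  exact hclosure (hS.closure_interior_eq_closure_of_nonempty_interior hint ▸ subset_closure ha)

variable [FiniteDimensional ℝ E] [NormedAddCommGroup F] [NormedSpace ℝ F]

theorem ConvexOn.exists_lagrange_multiplier_of_surjective [FiniteDimensional ℝ F]
    {C : Set E} {φ : E → ℝ} (hφ : ConvexOn ℝ C φ) {A : E →ₗ[ℝ] F}
    (hA : Function.Surjective A) {z₀ z : E} (hz₀ : z₀ ∈ interior C) (hAz₀ : A z₀ = 0)
    (hmin : ∀ w ∈ C, A w = 0 → φ z ≤ φ w) :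
    ∃ μ : F →ₗ[ℝ] ℝ, ∀ w ∈ C, φ z ≤ φ w + μ (A w) := by
  set T := φ z₀ + 1
  set S : Set (F × ℝ) := A.prodMap LinearMap.id '' {p : E × ℝ | p.1 ∈ C ∧ φ p.1 < p.2}
  have mem_S : ∀ w ∈ C, ∀ t, φ w < t → (A w, t) ∈ S := fun w hw t ht => ⟨(w, t), ⟨hw, ht⟩, rfl⟩
  have hS : Convex ℝ S := hφ.convex_strict_epigraph.linear_image _
  -- Slater: `φ` is continuous at `z₀` and `A` is an open map, so `(0, T + 1)` is interior to `S`.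
  have hU : IsOpen (interior C ∩ φ ⁻¹' Iio T) :=
    hφ.continuousOn_interior.isOpen_inter_preimage isOpen_interior isOpen_Iio
  have hV : (A '' (interior C ∩ φ ⁻¹' Iio T)) ×ˢ Ioi T ⊆ S := by
    rintro ⟨_, t⟩ ⟨⟨w, ⟨hwC, hwT⟩, rfl⟩, ht⟩
    exact mem_S w (interior_subset hwC) t (lt_trans hwT ht)
  have hp₀ : ((0 : F), T + 1) ∈ interior S := by
    refine interior_maximal hV ((A.isOpenMap_of_finiteDimensional hA _ hU).prod isOpen_Ioi) ?_
    exact ⟨⟨z₀, ⟨hz₀, by simp [T]⟩, hAz₀⟩, by simp [T]⟩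
  have hx : ((0 : F), φ z) ∉ interior S := by
    rintro hx
    obtain ⟨⟨w, t⟩, ⟨hwC, hwt⟩, hw⟩ := interior_subset hx
    simp only [LinearMap.prodMap_apply, LinearMap.id_apply, Prod.mk.injEq] at hw
    exact not_lt.2 (hmin w hwC hw.1) (hw.2 ▸ hwt)
  obtain ⟨ℓ, hℓS, hℓint⟩ := hS.exists_le_of_forall_interior_lt ⟨_, hp₀⟩ hx
  set s := ℓ (0, 1)
  have hℓ : ∀ y t, ℓ (y, t) = ℓ (y, 0) + t * s := fun y t => by
    rw [← smul_eq_mul, ← map_smul, ← map_add]; simp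
  -- The separating hyperplane is not vertical.
  have hs : s < 0 := by
    have h := hℓint _ hp₀
    rw [hℓ, hℓ 0 (φ z)] at h
    have := hmin z₀ (interior_subset hz₀) hAz₀
    nlinarith
  refine ⟨s⁻¹ • (ℓ.toLinearMap.comp (LinearMap.inl ℝ F ℝ)), fun w hw => ?_⟩
  refine le_of_forall_pos_le_add fun u hu => ?_
  have h := hℓS _ (mem_S w hw (φ w + u) (by linarith))
  rw [hℓ, hℓ 0 (φ z), Prod.mk_zero_zero, map_zero, zero_add] at h
  simp only [LinearMap.smul_apply, LinearMap.comp_apply, LinearMap.inl_apply,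
    ContinuousLinearMap.coe_coe, smul_eq_mul]
  have hℓA : ℓ (A w, 0) = s⁻¹ * ℓ (A w, 0) * s := by field_simp [hs.ne]
  rw [hℓA] at h
  nlinarith

theorem ConvexOn.exists_lagrange_multiplier {C : Set E} {φ : E → ℝ} (hφ : ConvexOn ℝ C φ)
    (A : E →ₗ[ℝ] F) {z₀ z : E} (hz₀ : z₀ ∈ interior C) (hAz₀ : A z₀ = 0)
    (hmin : ∀ w ∈ C, A w = 0 → φ z ≤ φ w) :
    ∃ μ : F →ₗ[ℝ] ℝ, ∀ w ∈ C, φ z ≤ φ w + μ (A w) := by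
  have hA : ∀ w, A.rangeRestrict w = 0 ↔ A w = 0 := fun w => by
    rw [← Subtype.coe_inj, LinearMap.codRestrict_apply]; rfl
  obtain ⟨μ, hμ⟩ := hφ.exists_lagrange_multiplier_of_surjective A.surjective_rangeRestrict hz₀
    ((hA z₀).2 hAz₀) fun w hw hAw => hmin w hw ((hA w).1 hAw)
  obtain ⟨μ', hμ'⟩ := LinearMap.exists_extend μ
  exact ⟨μ', fun w hw => by simpa [← hμ'] using hμ w hw⟩

end LagrangeMultiplier

namespace EReal

variable {α : Type*} {s : Finset α}

theorem coe_finset_sum_s4 (f : α → ℝ) : ((∑ a ∈ s, f a : ℝ) : EReal) = ∑ a ∈ s, (f a : EReal) :=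
  map_sum (⟨⟨(↑), coe_zero⟩, coe_add⟩ : ℝ →+ EReal) f s

theorem finset_sum_ne_bot {f : α → EReal} (h : ∀ a ∈ s, f a ≠ ⊥) : ∑ a ∈ s, f a ≠ ⊥ :=
  Finset.sum_induction f (· ≠ ⊥) (fun _ _ ha hb => add_ne_bot_iff.2 ⟨ha, hb⟩) zero_ne_bot h

theorem finset_sum_eq_top [DecidableEq α] {f : α → EReal} (h : ∀ a ∈ s, f a ≠ ⊥) {a : α}
    (ha : a ∈ s) (htop : f a = ⊤) : ∑ a ∈ s, f a = ⊤ := by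
  rw [← Finset.add_sum_erase s f ha, htop]
  exact top_add_of_ne_bot (finset_sum_ne_bot fun b hb => h b (Finset.mem_of_mem_erase hb))

theorem finset_sum_eq_coe {f : α → EReal} (h : ∀ a ∈ s, f a ≠ ⊥) (h' : ∀ a ∈ s, f a ≠ ⊤) :
    ∑ a ∈ s, f a = ((∑ a ∈ s, (f a).toReal : ℝ) : EReal) := by
  rw [coe_finset_sum_s4]
  exact Finset.sum_congr rfl fun a ha => (coe_toReal (h' a ha) (h a ha)).symm

end EReal

theorem ConvexOn.finset_sum {ι E : Type*} [AddCommGroup E] [Module ℝ E] {s : Set E}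
    (hs : Convex ℝ s) (t : Finset ι) {f : ι → E → ℝ} (hf : ∀ i ∈ t, ConvexOn ℝ s (f i)) :
    ConvexOn ℝ s fun x => ∑ i ∈ t, f i x := by
  classical
  induction t using Finset.induction_on with
  | empty => simpa using convexOn_const 0 hs
  | insert a t ha ih =>
    simp_rw [Finset.sum_insert ha]
    exact (hf a (Finset.mem_insert_self a t)).add
      (ih fun i hi => hf i (Finset.mem_insert_of_mem hi))

theorem convexOn_toReal_iSup_coe {ι E : Type*} [Nonempty ι] [AddCommGroup E] [Module ℝ E]
    {g : ι → E → ℝ} (hg : ∀ i, ConvexOn ℝ univ (g i)) :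
    ConvexOn ℝ {x | ⨆ i, (g i x : EReal) ≠ ⊤} fun x => (⨆ i, (g i x : EReal)).toReal := by
  set Φ : E → EReal := fun x => ⨆ i, (g i x : EReal)
  have hbot : ∀ x, Φ x ≠ ⊥ := fun x =>
    ne_bot_of_le_ne_bot (EReal.coe_ne_bot (g (Classical.arbitrary ι) x))
      (le_iSup (fun i => (g i x : EReal)) _)
  have hle : ∀ x, Φ x ≠ ⊤ → ∀ i, g i x ≤ (Φ x).toReal := fun x hx i =>
    EReal.coe_le_coe_iff.1 ((le_iSup (fun i => (g i x : EReal)) i).trans (EReal.le_coe_toReal hx))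
  have hcombo : ∀ x, Φ x ≠ ⊤ → ∀ y, Φ y ≠ ⊤ → ∀ a b : ℝ, 0 ≤ a → 0 ≤ b → a + b = 1 →
      Φ (a • x + b • y) ≤ ((a * (Φ x).toReal + b * (Φ y).toReal : ℝ) : EReal) :=
    fun x hx y hy a b ha hb hab => iSup_le fun i => EReal.coe_le_coe_iff.2 <|
      ((hg i).2 trivial trivial ha hb hab).trans <| by
        simp only [smul_eq_mul]
        gcongr
        exacts [hle x hx i, hle y hy i]
  refine ⟨fun x hx y hy a b ha hb hab => ?_, fun x hx y hy a b ha hb hab => ?_⟩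
  · exact ne_top_of_le_ne_top (EReal.coe_ne_top _) (hcombo x hx y hy a b ha hb hab)
  · have := EReal.toReal_le_toReal (hcombo x hx y hy a b ha hb hab) (hbot _) (EReal.coe_ne_top _)
    rwa [EReal.toReal_coe] at this

namespace DistributedDRO

variable {d m n N : ℕ}

abbrev Stacked (d n : ℕ) := (Fin n → Vec d) × (Fin n → ℝ)

section Objective

variable (ε : ℝ) (f : Vec d → Vec m → ℝ) (ξhat : Fin N → Vec m) (v : Fin N → Fin n)

def sampleSup (k : Fin N) (x : Vec d) (lam : ℝ) : EReal :=
  ⨆ ξ : Vec m, ((gk f ξhat k x lam ξ : ℝ) : EReal)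

def finiteDom : Set (Stacked d n) :=
  {z | (∀ i, 0 ≤ z.2 i) ∧ ∀ k, sampleSup f ξhat k (z.1 (v k)) (z.2 (v k)) ≠ ⊤}

def FobjReal (z : Stacked d n) : ℝ :=
  ε ^ 2 / n * ∑ i, z.2 i + 1 / N * ∑ k, (sampleSup f ξhat k (z.1 (v k)) (z.2 (v k))).toReal

variable {ε f ξhat v}

theorem sampleSup_ne_bot (k : Fin N) (x : Vec d) (lam : ℝ) : sampleSup f ξhat k x lam ≠ ⊥ :=
  ne_bot_of_le_ne_bot (EReal.coe_ne_bot _)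
    (le_iSup (fun ξ => ((gk f ξhat k x lam ξ : ℝ) : EReal)) 0)

-- The common shape of `Fobj` and `Jobj`.
theorem coe_add_mul_sum_sampleSup_eq_top (a : ℝ) {p : Fin N → Vec d × ℝ} {k : Fin N}
    (hk : sampleSup f ξhat k (p k).1 (p k).2 = ⊤) :
    ((a : ℝ) : EReal) + ((1 / N : ℝ) : EReal) * ∑ k, sampleSup f ξhat k (p k).1 (p k).2 = ⊤ := by
  classical
  have hN : (0 : ℝ) < 1 / N := by have := k.pos; positivity
  rw [EReal.finset_sum_eq_top (f := fun k => sampleSup f ξhat k (p k).1 (p k).2)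
      (fun k _ => sampleSup_ne_bot _ _ _) (Finset.mem_univ k) hk,
    EReal.coe_mul_top_of_pos hN, EReal.coe_add_top]

theorem Fobj_eq_coe {z : Stacked d n}
    (hz : ∀ k, sampleSup f ξhat k (z.1 (v k)) (z.2 (v k)) ≠ ⊤) :
    Fobj ε f ξhat v z.1 z.2 = FobjReal ε f ξhat v z := by
  change ((_ : ℝ) : EReal) + _ * ∑ k, sampleSup f ξhat k _ _ = _
  rw [EReal.finset_sum_eq_coe (fun k _ => sampleSup_ne_bot _ _ _) (fun k _ => hz k),
    ← EReal.coe_mul, ← EReal.coe_add]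
  rfl

theorem Fobj_eq_top_s4 {z : Stacked d n} {k : Fin N}
    (hk : sampleSup f ξhat k (z.1 (v k)) (z.2 (v k)) = ⊤) : Fobj ε f ξhat v z.1 z.2 = ⊤ :=
  coe_add_mul_sum_sampleSup_eq_top (p := fun k => (z.1 (v k), z.2 (v k))) _ hk

theorem Fobj_ne_bot_s4 (z : Stacked d n) : Fobj ε f ξhat v z.1 z.2 ≠ ⊥ := by
  rcases em (∃ k, sampleSup f ξhat k (z.1 (v k)) (z.2 (v k)) = ⊤) with ⟨k, hk⟩ | hz
  · rw [Fobj_eq_top_s4 hk]; exact top_ne_bot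
  · rw [Fobj_eq_coe (not_exists.1 hz)]; exact EReal.coe_ne_bot _

theorem sampleSup_ne_top_of_Jobj_ne_top {x : Vec d} {lam : ℝ} (h : Jobj ε f ξhat x lam ≠ ⊤)
    (k : Fin N) : sampleSup f ξhat k x lam ≠ ⊤ :=
  fun hk => h (coe_add_mul_sum_sampleSup_eq_top (p := fun _ => (x, lam)) _ hk)

theorem convexOn_gk (hconv : ∀ ξ, ConvexOn ℝ univ fun x => f x ξ) (k : Fin N) (ξ : Vec m) :
    ConvexOn ℝ univ fun p : Vec d × ℝ => gk f ξhat k p.1 p.2 ξ :=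
  ((hconv ξ).comp_linearMap (LinearMap.fst ℝ _ ℝ)).sub
    ((‖ξ - ξhat k‖ ^ 2 • LinearMap.snd ℝ (Vec d) ℝ).concaveOn convex_univ) |>.congr
    fun p _ => by simp [gk, mul_comm]

theorem convexOn_sampleSup (hconv : ∀ ξ, ConvexOn ℝ univ fun x => f x ξ) (k : Fin N) :
    ConvexOn ℝ {p : Vec d × ℝ | sampleSup f ξhat k p.1 p.2 ≠ ⊤}
      fun p => (sampleSup f ξhat k p.1 p.2).toReal :=
  convexOn_toReal_iSup_coe (convexOn_gk hconv k)

variable (v) in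
def samplePoint (k : Fin N) : Stacked d n →ₗ[ℝ] Vec d × ℝ :=
  (LinearMap.proj (v k)).prodMap (LinearMap.proj (v k))

theorem convex_finiteDom (hconv : ∀ ξ, ConvexOn ℝ univ fun x => f x ξ) :
    Convex ℝ (finiteDom f ξhat v) := by
  have h : finiteDom f ξhat v = LinearMap.snd ℝ _ _ ⁻¹' Ici 0 ∩
      ⋂ k, samplePoint v k ⁻¹' {p | sampleSup f ξhat k p.1 p.2 ≠ ⊤} := by
    ext z; simp [finiteDom, samplePoint, Pi.le_def]
  rw [h]
  exact ((convex_Ici 0).linear_preimage _).inter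
    (convex_iInter fun k => (convexOn_sampleSup hconv k).1.linear_preimage _)

theorem convexOn_FobjReal (hconv : ∀ ξ, ConvexOn ℝ univ fun x => f x ξ) :
    ConvexOn ℝ (finiteDom f ξhat v) (FobjReal ε f ξhat v) := by
  have hD := convex_finiteDom (ξhat := ξhat) (v := v) hconv
  have hsample : ∀ k, ConvexOn ℝ (finiteDom f ξhat v)
      fun z => (sampleSup f ξhat k (z.1 (v k)) (z.2 (v k))).toReal := fun k =>
    ((convexOn_sampleSup hconv k).comp_linearMap (samplePoint v k)).subset
      (fun z hz => hz.2 k) hD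
  have hlin :=
    ((ε ^ 2 / n) • ∑ i, LinearMap.proj i ∘ₗ LinearMap.snd ℝ (Fin n → Vec d) _).convexOn hD
  have hN : (0 : ℝ) ≤ 1 / N := by positivity
  exact (hlin.add ((ConvexOn.finset_sum hD Finset.univ fun k _ => hsample k).smul hN)).congr
    fun z _ => by simp [FobjReal]

end Objective

section Pairing

def lagrangePairing (ν : Fin n → ℝ) (η : Fin n → Vec d) (y : Stacked d n) : ℝ :=
  ∑ i, ν i * y.2 i + ∑ i, inner ℝ (η i) (y.1 i)

theorem lagrangePairing_add (ν ν' : Fin n → ℝ) (η η' : Fin n → Vec d) (y : Stacked d n) :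
    lagrangePairing (ν + ν') (η + η') y = lagrangePairing ν η y + lagrangePairing ν' η' y := by
  simp only [lagrangePairing, Pi.add_apply, add_mul, inner_add_left, Finset.sum_add_distrib]
  ring

theorem lagrangePairing_self_eq_zero_iff {y : Stacked d n} :
    lagrangePairing y.2 y.1 y = 0 ↔ y = 0 := by
  have h₁ : ∀ i ∈ Finset.univ, 0 ≤ y.2 i * y.2 i := fun i _ => mul_self_nonneg _
  have h₂ : ∀ i ∈ Finset.univ, 0 ≤ inner ℝ (y.1 i) (y.1 i) := fun i _ => real_inner_self_nonneg
  rw [lagrangePairing, add_eq_zero_iff_of_nonneg (Finset.sum_nonneg h₁) (Finset.sum_nonneg h₂),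
    Finset.sum_eq_zero_iff_of_nonneg h₁, Finset.sum_eq_zero_iff_of_nonneg h₂, Prod.ext_iff]
  simp [funext_iff, and_comm]

theorem eq_zero_of_forall_lagrangePairing_le {y : Stacked d n} {ν : Fin n → ℝ}
    {η : Fin n → Vec d} (h : ∀ ν' η', lagrangePairing ν' η' y ≤ lagrangePairing ν η y) :
    y = 0 := by
  have hle := h (ν + y.2) (η + y.1)
  rw [lagrangePairing_add] at hle
  have hnonneg : 0 ≤ lagrangePairing y.2 y.1 y :=
    add_nonneg (Finset.sum_nonneg fun i _ => mul_self_nonneg _)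
      (Finset.sum_nonneg fun i _ => real_inner_self_nonneg)
  exact lagrangePairing_self_eq_zero_iff.1 (by linarith)

theorem exists_lagrangePairing_eq (μ : Stacked d n →ₗ[ℝ] ℝ) :
    ∃ ν η, ∀ y, μ y = lagrangePairing ν η y := by
  let μx : Fin n → Vec d →ₗ[ℝ] ℝ := fun i =>
    μ ∘ₗ LinearMap.inl ℝ _ _ ∘ₗ LinearMap.single ℝ (fun _ : Fin n => Vec d) i
  refine ⟨fun i => μ (0, Pi.single i 1),
    fun i => (InnerProductSpace.toDual ℝ (Vec d)).symm (μx i).toContinuousLinearMap, fun y => ?_⟩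
  have hx : μ (y.1, 0) = ∑ i, μx i (y.1 i) := by
    simpa [μx, Finset.univ_sum_single] using
      map_sum (μ ∘ₗ LinearMap.inl ℝ _ _) (fun i => Pi.single i (y.1 i)) Finset.univ
  have hlam : μ (0, y.2) = ∑ i, y.2 i * μ (0, Pi.single i 1) := by
    have hsum : y.2 = ∑ i, y.2 i • Pi.single i (1 : ℝ) := by ext j; simp [Pi.single_apply]
    have := map_sum (μ ∘ₗ LinearMap.inr ℝ _ _) (fun i => y.2 i • Pi.single i 1) Finset.univ
    simpa only [LinearMap.comp_apply, LinearMap.inr_apply, map_smul, smul_eq_mul, ← hsum]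
      using this
  simp_rw [lagrangePairing, mul_comm _ (y.2 _), ← hlam, InnerProductSpace.toDual_symm_apply]
  simp [← hx, ← map_add]

end Pairing

section Constraint

variable (Lap : Matrix (Fin n) (Fin n) ℝ)

def lapConstraint : Stacked d n →ₗ[ℝ] Stacked d n :=
  (LinearMap.pi fun i => ∑ j, Lap i j • LinearMap.proj j).prodMap Lap.mulVecLin

variable {Lap}

theorem lapConstraint_apply (z : Stacked d n) :
    lapConstraint Lap z = (fun i => ∑ j, Lap i j • z.1 j, Lap.mulVec z.2) := by
  refine Prod.ext (funext fun i => ?_) rfl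
  simp [lapConstraint]

theorem mem_Feas_iff {z : Stacked d n} :
    z ∈ Feas (d := d) Lap ↔ (∀ i, 0 ≤ z.2 i) ∧ lapConstraint Lap z = 0 := by
  simp [Feas, lapConstraint_apply, Prod.ext_iff, funext_iff, and_comm]

variable {ε : ℝ} {f : Vec d → Vec m → ℝ} {ξhat : Fin N → Vec m} {v : Fin N → Fin n}

theorem Lagr_eq (xv : Fin n → Vec d) (lv ν : Fin n → ℝ) (η : Fin n → Vec d) :
    Lagr ε f ξhat v Lap xv lv ν η = Fobj ε f ξhat v xv lv
      + ((lagrangePairing ν η (lapConstraint Lap (xv, lv)) : ℝ) : EReal) := by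
  rw [Lagr, lapConstraint_apply, lagrangePairing]

theorem Lagr_of_mem_Feas {xv : Fin n → Vec d} {lv : Fin n → ℝ}
    (hz : ((xv, lv) : Stacked d n) ∈ Feas (d := d) Lap) (ν : Fin n → ℝ) (η : Fin n → Vec d) :
    Lagr ε f ξhat v Lap xv lv ν η = Fobj ε f ξhat v xv lv := by
  simp [Lagr_eq, (mem_Feas_iff.1 hz).2, lagrangePairing]

end Constraint

section SlaterPoint

def consensus (q : Vec d × ℝ) : Stacked d n := (fun _ => q.1, fun _ => q.2)

theorem consensus_mem_Feas {Lap : Matrix (Fin n) (Fin n) ℝ} (hL : Lap.mulVec (fun _ => 1) = 0)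
    {q : Vec d × ℝ} (hq : 0 ≤ q.2) : consensus q ∈ Feas (d := d) Lap := by
  have hrow : ∀ i, ∑ j, Lap i j = 0 := fun i => by
    simpa [Matrix.mulVec, dotProduct] using congrFun hL i
  refine ⟨fun _ => hq, ?_, fun i => ?_⟩
  · ext i; simp [consensus, Matrix.mulVec, dotProduct, ← Finset.sum_mul, hrow]
  · simp [consensus, ← Finset.sum_smul, hrow]

theorem consensus_mem_interior_finiteDom {ε : ℝ} {f : Vec d → Vec m → ℝ} {ξhat : Fin N → Vec m}
    (v : Fin N → Fin n) {q : Vec d × ℝ}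
    (hq : q ∈ interior {p : Vec d × ℝ | 0 ≤ p.2 ∧ ∃ r : ℝ, Jobj ε f ξhat p.1 p.2 = (r : EReal)}) :
    consensus q ∈ interior (finiteDom f ξhat v) := by
  set S := {p : Vec d × ℝ | 0 ≤ p.2 ∧ ∃ r : ℝ, Jobj ε f ξhat p.1 p.2 = (r : EReal)}
  have hsub : ⋂ i, (fun z : Stacked d n => (z.1 i, z.2 i)) ⁻¹' S ⊆ finiteDom f ξhat v := by
    intro z hz
    rw [mem_iInter] at hz
    refine ⟨fun i => (hz i).1, fun k => ?_⟩
    obtain ⟨r, hr⟩ := (hz (v k)).2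
    exact sampleSup_ne_top_of_Jobj_ne_top (hr ▸ EReal.coe_ne_top r) k
  refine interior_mono hsub ?_
  rw [interior_iInter_of_finite]
  exact mem_iInter.2 fun i => preimage_interior_subset_interior_preimage (by fun_prop) hq

end SlaterPoint

variable {ε : ℝ} {f : Vec d → Vec m → ℝ} {ξhat : Fin N → Vec m} {v : Fin N → Fin n}
  {Lap : Matrix (Fin n) (Fin n) ℝ}

theorem IsSaddleLagr.mem_Feas_and_le {z₀ : Stacked d n} (hz₀ : z₀ ∈ Feas (d := d) Lap)
    (hz₀fin : Fobj ε f ξhat v z₀.1 z₀.2 ≠ ⊤) {xv : Fin n → Vec d} {lv ν : Fin n → ℝ}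
    {η : Fin n → Vec d} (h : IsSaddleLagr ε f ξhat v Lap xv lv ν η) :
    ((xv, lv) : Stacked d n) ∈ Feas (d := d) Lap ∧
      ∀ p ∈ Feas (d := d) Lap, Fobj ε f ξhat v xv lv ≤ Fobj ε f ξhat v p.1 p.2 := by
  obtain ⟨hlv, hmax, hmin⟩ := h
  have hfin : Fobj ε f ξhat v xv lv ≠ ⊤ := by
    intro htop
    have := hmin z₀.1 z₀.2 hz₀.1
    rw [Lagr_of_mem_Feas hz₀, Lagr_eq, htop, EReal.top_add_coe, top_le_iff] at this
    exact hz₀fin this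
  obtain ⟨r, hr⟩ : ∃ r : ℝ, Fobj ε f ξhat v xv lv = r :=
    ⟨_, (EReal.coe_toReal hfin (Fobj_ne_bot_s4 ((xv, lv) : Stacked d n))).symm⟩
  have hfeas : ((xv, lv) : Stacked d n) ∈ Feas (d := d) Lap := by
    refine mem_Feas_iff.2 ⟨hlv, eq_zero_of_forall_lagrangePairing_le (ν := ν) (η := η) ?_⟩
    intro ν' η'
    have := hmax ν' η'
    rwa [Lagr_eq, Lagr_eq, hr, ← EReal.coe_add, ← EReal.coe_add, EReal.coe_le_coe_iff,
      add_le_add_iff_left] at this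
  refine ⟨hfeas, fun p hp => ?_⟩
  simpa [Lagr_of_mem_Feas hfeas, Lagr_of_mem_Feas hp] using hmin p.1 p.2 hp.1

theorem exists_isSaddleLagr (hconv : ∀ ξ, ConvexOn ℝ univ fun x => f x ξ) {z₀ : Stacked d n}
    (hz₀ : z₀ ∈ interior (finiteDom f ξhat v)) (hz₀F : z₀ ∈ Feas (d := d) Lap)
    {xv : Fin n → Vec d} {lv : Fin n → ℝ} (hfeas : ((xv, lv) : Stacked d n) ∈ Feas (d := d) Lap)
    (hopt : ∀ p ∈ Feas (d := d) Lap, Fobj ε f ξhat v xv lv ≤ Fobj ε f ξhat v p.1 p.2) :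
    ∃ ν η, IsSaddleLagr ε f ξhat v Lap xv lv ν η := by
  have hz₀dom := interior_subset hz₀
  have hdom : ((xv, lv) : Stacked d n) ∈ finiteDom f ξhat v := by
    refine ⟨hfeas.1, fun k hk => ?_⟩
    have := hopt z₀ hz₀F
    rw [Fobj_eq_top_s4 (z := (xv, lv)) hk, Fobj_eq_coe hz₀dom.2, top_le_iff] at this
    exact EReal.coe_ne_top _ this
  have hmin : ∀ w ∈ finiteDom f ξhat v, lapConstraint Lap w = 0 →
      FobjReal ε f ξhat v (xv, lv) ≤ FobjReal ε f ξhat v w := fun w hw hAw => by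
    have := hopt w (mem_Feas_iff.2 ⟨hw.1, hAw⟩)
    rwa [Fobj_eq_coe (z := (xv, lv)) hdom.2, Fobj_eq_coe hw.2, EReal.coe_le_coe_iff] at this
  obtain ⟨μ, hμ⟩ := (convexOn_FobjReal hconv).exists_lagrange_multiplier (lapConstraint Lap) hz₀
    (mem_Feas_iff.1 hz₀F).2 hmin
  obtain ⟨ν, η, hνη⟩ := exists_lagrangePairing_eq μ
  refine ⟨ν, η, hfeas.1, fun ν' η' => by rw [Lagr_of_mem_Feas hfeas, Lagr_of_mem_Feas hfeas],
    fun xv' lv' hlv' => ?_⟩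
  rw [Lagr_of_mem_Feas hfeas, Lagr_eq]
  rcases em (∃ k, sampleSup f ξhat k (xv' (v k)) (lv' (v k)) = ⊤) with ⟨k, hk⟩ | hw
  · rw [Fobj_eq_top_s4 (z := (xv', lv')) hk, EReal.top_add_coe]
    exact le_top
  · rw [Fobj_eq_coe (z := (xv, lv)) hdom.2, Fobj_eq_coe (z := (xv', lv')) (not_exists.1 hw),
      ← EReal.coe_add, EReal.coe_le_coe_iff, ← hνη]
    exact hμ (xv', lv') ⟨hlv', not_exists.1 hw⟩

end DistributedDRO

open DistributedDRO

theorem lagrangian_saddle_iff_distributed_optimizer_general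
    {d m n N : ℕ}
    (f : Vec d → Vec m → ℝ) (ξhat : Fin N → Vec m) (ε : ℝ)
    (hconv : ∀ ξ : Vec m, ConvexOn ℝ Set.univ (fun x => f x ξ))
    (v : Fin N → Fin n)
    (Lap : Matrix (Fin n) (Fin n) ℝ)
    (hLker : ∀ w : Fin n → ℝ, Lap.mulVec w = 0 ↔ ∃ c : ℝ, w = fun _ => c)
    (hfin : (interior {p : Vec d × ℝ |
        0 ≤ p.2 ∧ ∃ r : ℝ, Jobj ε f ξhat p.1 p.2 = (r : EReal)}).Nonempty) :
    (∀ (xv : Fin n → Vec d) (lv ν : Fin n → ℝ) (η : Fin n → Vec d),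
      IsSaddleLagr ε f ξhat v Lap xv lv ν η →
        ((xv, lv) : (Fin n → Vec d) × (Fin n → ℝ)) ∈ Feas (d := d) Lap ∧
        ∀ p ∈ Feas (d := d) Lap,
          Fobj ε f ξhat v xv lv ≤ Fobj ε f ξhat v p.1 p.2) ∧
    (∀ (xv : Fin n → Vec d) (lv : Fin n → ℝ),
      ((xv, lv) : (Fin n → Vec d) × (Fin n → ℝ)) ∈ Feas (d := d) Lap →
      (∀ p ∈ Feas (d := d) Lap,
        Fobj ε f ξhat v xv lv ≤ Fobj ε f ξhat v p.1 p.2) →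
      ∃ (ν : Fin n → ℝ) (η : Fin n → Vec d),
        IsSaddleLagr ε f ξhat v Lap xv lv ν η) := by
  obtain ⟨q, hq⟩ := hfin
  have hz₀ : consensus q ∈ interior (finiteDom f ξhat v) := consensus_mem_interior_finiteDom v hq
  have hz₀F : consensus q ∈ Feas (d := d) Lap :=
    consensus_mem_Feas ((hLker _).2 ⟨1, rfl⟩) (interior_subset hq).1
  have hz₀fin : Fobj ε f ξhat v (consensus q).1 (consensus q).2 ≠ ⊤ := by
    rw [Fobj_eq_coe (interior_subset hz₀).2]
    exact EReal.coe_ne_top _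
  exact ⟨fun xv lv ν η h => h.mem_Feas_and_le hz₀F hz₀fin,
    fun xv lv hfeas hopt => exists_isSaddleLagr hconv hz₀ hz₀F hfeas hopt⟩

/-- (i) saddle points of L give optimizers of the distributed problem;
(ii) optimizers of the distributed problem extend to saddle points of L. -/
theorem lagrangian_saddle_iff_distributed_optimizer
    {d m n N : ℕ} (hn : 0 < n) (hN : 0 < N)
    (f : Vec d → Vec m → ℝ) (ξhat : Fin N → Vec m) (ε : ℝ) (hε : 0 < ε)
    (hf : ContDiff ℝ 1 (Function.uncurry f))
    (hconv : ∀ ξ : Vec m, ConvexOn ℝ Set.univ (fun x => f x ξ))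
    (v : Fin N → Fin n) (hv : Function.Surjective v)
    (Lap : Matrix (Fin n) (Fin n) ℝ) (hLsym : Lap.IsSymm) (hLpsd : Lap.PosSemidef)
    (hLker : ∀ w : Fin n → ℝ, Lap.mulVec w = 0 ↔ ∃ c : ℝ, w = fun _ => c)
    (hfin : (interior {p : Vec d × ℝ |
        0 ≤ p.2 ∧ ∃ r : ℝ, Jobj ε f ξhat p.1 p.2 = (r : EReal)}).Nonempty)
    (hopt : ∃ (xs : Vec d) (ls : ℝ), 0 ≤ ls ∧ ∀ x : Vec d, ∀ lam : ℝ, 0 ≤ lam →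
      Jobj ε f ξhat xs ls ≤ Jobj ε f ξhat x lam) :
    (∀ (xv : Fin n → Vec d) (lv ν : Fin n → ℝ) (η : Fin n → Vec d),
      IsSaddleLagr ε f ξhat v Lap xv lv ν η →
        ((xv, lv) : (Fin n → Vec d) × (Fin n → ℝ)) ∈ Feas (d := d) Lap ∧
        ∀ p ∈ Feas (d := d) Lap,
          Fobj ε f ξhat v xv lv ≤ Fobj ε f ξhat v p.1 p.2) ∧
    (∀ (xv : Fin n → Vec d) (lv : Fin n → ℝ),
      ((xv, lv) : (Fin n → Vec d) × (Fin n → ℝ)) ∈ Feas (d := d) Lap →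
      (∀ p ∈ Feas (d := d) Lap,
        Fobj ε f ξhat v xv lv ≤ Fobj ε f ξhat v p.1 p.2) →
      ∃ (ν : Fin n → ℝ) (η : Fin n → Vec d),
        IsSaddleLagr ε f ξhat v Lap xv lv ν η) :=
  lagrangian_saddle_iff_distributed_optimizer_general f ξhat ε hconv v Lap hLker hfin
end
end

section
/- A point (x_v*, λ_v*, ν*, η*) is a saddle point of L over (ℝ^{nd} × ℝ_{≥0}ⁿ) × (ℝⁿ × ℝ^{nd}) if and only if it is a saddle point of L_aug over the same domain. -/
open scoped BigOperators RealInnerProductSpace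
open Finset

noncomputable section

/-- A saddle point of the augmented Lagrangian L_aug over the same domain. -/
def IsSaddleLagrAug {d m n N : ℕ} (ε : ℝ) (f : Vec d → Vec m → ℝ) (ξhat : Fin N → Vec m)
    (v : Fin N → Fin n) (Lap : Matrix (Fin n) (Fin n) ℝ)
    (xv : Fin n → Vec d) (lv : Fin n → ℝ) (ν : Fin n → ℝ) (η : Fin n → Vec d) : Prop :=
  (∀ i, 0 ≤ lv i) ∧
  (∀ (ν' : Fin n → ℝ) (η' : Fin n → Vec d),
    LagrAug ε f ξhat v Lap xv lv ν' η' ≤ LagrAug ε f ξhat v Lap xv lv ν η) ∧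
  (∀ (xv' : Fin n → Vec d) (lv' : Fin n → ℝ), (∀ i, 0 ≤ lv' i) →
    LagrAug ε f ξhat v Lap xv lv ν η ≤ LagrAug ε f ξhat v Lap xv' lv' ν η)

/-! Both Lagrangians are affine in the multipliers `(ν, η)`, and they differ by the penalty
`½ zᵀ(𝖫 ⊗ I)z` of `z = (x_v, λ_v)`, which does not depend on the multipliers; so the two
maximality conditions coincide. If `F(z*) < ∞`, maximality in `(ν, η)` forces the consensus
`(𝖫 ⊗ I)z* = 0`, where the penalty vanishes; as the penalty is nonnegative,
`L_aug(z*) = L(z*) ≤ L(z) ≤ L_aug(z)`. Conversely, along `z_t = (1 - t)z* + tz` the penalty is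
`t² · penalty(z)` because `z*` lies in the kernel, while `L` is convex, so minimality of `L_aug`
gives `L(z*) ≤ (1 - t)L(z*) + tL(z) + t² penalty(z)`; dividing by `t` and letting `t → 0`
yields `L(z*) ≤ L(z)`. If `F(z*) = ∞`, both minimality conditions say that `F = ∞` on the
whole domain. -/

open Matrix

section KroneckerForm

variable {ι E : Type*} [Fintype ι] [NormedAddCommGroup E] [InnerProductSpace ℝ E]
  {M : Matrix ι ι ℝ}

/-- The action of `M ⊗ I` on a stacked vector `x : ι → E`. -/
def kronMulVec (M : Matrix ι ι ℝ) : (ι → E) →ₗ[ℝ] ι → E :=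
  LinearMap.pi fun i => ∑ j, M i j • LinearMap.proj j

@[simp]
lemma kronMulVec_apply (M : Matrix ι ι ℝ) (x : ι → E) (i : ι) :
    kronMulVec M x i = ∑ j, M i j • x j := by
  simp [kronMulVec]

lemma kronMulVec_real (M : Matrix ι ι ℝ) (x : ι → ℝ) : kronMulVec M x = M *ᵥ x := by
  funext i
  simp [Matrix.mulVec, dotProduct]

def kronForm (M : Matrix ι ι ℝ) (y x : ι → E) : ℝ :=
  ∑ i, ⟪y i, kronMulVec M x i⟫

lemma kronForm_real (M : Matrix ι ι ℝ) (y x : ι → ℝ) :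
    kronForm M y x = ∑ i, y i * (M *ᵥ x) i := by
  simp only [kronForm, kronMulVec_real, Real.inner_apply]

lemma kronForm_eq_sum_sum (M : Matrix ι ι ℝ) (y x : ι → E) :
    kronForm M y x = ∑ i, ∑ j, M i j * ⟪y i, x j⟫ := by
  simp [kronForm, inner_sum, real_inner_smul_right]

lemma kronForm_eq_zero_of_kronMulVec_eq_zero {x : ι → E} (hx : kronMulVec M x = 0)
    (y : ι → E) : kronForm M y x = 0 := by
  simp only [kronForm, hx, Pi.zero_apply, inner_zero_right, Finset.sum_const_zero]

lemma kronForm_smul_add_smul_right (y x x' : ι → E) (a b : ℝ) :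
    kronForm M y (a • x + b • x') = a * kronForm M y x + b * kronForm M y x' := by
  simp only [kronForm, map_add, map_smul, Pi.add_apply, Pi.smul_apply, inner_add_right,
    real_inner_smul_right, Finset.sum_add_distrib, Finset.mul_sum]

lemma kronForm_comm (hM : M.IsSymm) (y x : ι → E) : kronForm M y x = kronForm M x y := by
  rw [kronForm_eq_sum_sum, kronForm_eq_sum_sum, Finset.sum_comm]
  simp_rw [hM.apply, real_inner_comm]

lemma kronForm_self_nonneg (hM : M.PosSemidef) (x : ι → E) : 0 ≤ kronForm M x x := by
  obtain ⟨m, u, rfl⟩ := Matrix.posSemidef_iff_eq_sum_vecMulVec.1 hM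
  have h : kronForm (∑ k, Matrix.vecMulVec (u k) (star (u k))) x x
      = ∑ k, ⟪∑ i, u k i • x i, ∑ j, u k j • x j⟫ := by
    simp only [kronForm_eq_sum_sum, Matrix.sum_apply, Matrix.vecMulVec_apply, star_trivial,
      sum_inner, inner_sum, real_inner_smul_left, real_inner_smul_right, Finset.sum_mul]
    rw [Finset.sum_comm, Finset.sum_congr rfl fun _ _ => Finset.sum_comm, Finset.sum_comm]
    simp_rw [← mul_assoc, mul_comm (u _ _) (u _ _)]
  rw [h]
  exact Finset.sum_nonneg fun k _ => real_inner_self_nonneg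

lemma kronMulVec_eq_zero_of_forall_kronForm_le {x y₀ : ι → E}
    (h : ∀ y, kronForm M y x ≤ kronForm M y₀ x) : kronMulVec M x = 0 := by
  have hsq := h (y₀ + kronMulVec M x)
  simp only [kronForm, Pi.add_apply, inner_add_left, Finset.sum_add_distrib,
    add_le_iff_nonpos_right] at hsq
  have hzero := (Finset.sum_eq_zero_iff_of_nonneg fun i _ => real_inner_self_nonneg).1
    (le_antisymm hsq (Finset.sum_nonneg fun i _ => real_inner_self_nonneg))
  funext i
  exact inner_self_eq_zero.1 (hzero i (Finset.mem_univ i))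

lemma kronForm_lineMap_self (hM : M.IsSymm) {x₀ : ι → E} (hx₀ : kronMulVec M x₀ = 0)
    (x : ι → E) (t : ℝ) :
    kronForm M ((1 - t) • x₀ + t • x) ((1 - t) • x₀ + t • x) = t ^ 2 * kronForm M x x := by
  rw [kronForm_smul_add_smul_right, kronForm_eq_zero_of_kronMulVec_eq_zero hx₀, kronForm_comm hM,
    kronForm_smul_add_smul_right, kronForm_eq_zero_of_kronMulVec_eq_zero hx₀]
  ring

end KroneckerForm

namespace EReal

variable {ι : Type*} {s : Finset ι} {g : ι → EReal}

@[norm_cast]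
lemma coe_finset_sum_s5 (s : Finset ι) (g : ι → ℝ) :
    ((∑ i ∈ s, g i : ℝ) : EReal) = ∑ i ∈ s, (g i : EReal) :=
  map_sum (⟨⟨(↑), coe_zero⟩, coe_add⟩ : ℝ →+ EReal) g s

lemma finset_sum_ne_bot_s5 (h : ∀ i ∈ s, g i ≠ ⊥) : ∑ i ∈ s, g i ≠ ⊥ := by
  induction s using Finset.cons_induction with
  | empty => simp
  | cons a s ha ih =>
    rw [Finset.sum_cons]
    exact add_ne_bot_iff.2 ⟨h a (Finset.mem_cons_self a s),
      ih fun i hi => h i (Finset.mem_cons_of_mem hi)⟩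

lemma ne_top_of_finset_sum_ne_top (h : ∀ i ∈ s, g i ≠ ⊥) (hs : ∑ i ∈ s, g i ≠ ⊤) :
    ∀ i ∈ s, g i ≠ ⊤ := by
  induction s using Finset.cons_induction with
  | empty => simp
  | cons a s ha ih =>
    have h' : ∀ i ∈ s, g i ≠ ⊥ := fun i hi => h i (Finset.mem_cons_of_mem hi)
    rw [Finset.sum_cons, add_ne_top_iff_ne_top₂ (h a (Finset.mem_cons_self a s))
      (finset_sum_ne_bot_s5 h')] at hs
    simpa [hs.1] using ih h' hs.2

end EReal

lemma le_of_forall_le_add_mul {a b C : ℝ} (h : ∀ t : ℝ, 0 < t → t < 1 → a ≤ b + t * C) :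
    a ≤ b := by
  have hlim : Filter.Tendsto (fun t : ℝ => b + t * C) (nhdsWithin 0 (Set.Ioi 0)) (nhds b) := by
    have hcont : Continuous fun t : ℝ => b + t * C := by fun_prop
    exact tendsto_nhdsWithin_of_tendsto_nhds (hcont.tendsto' 0 b (by simp))
  refine ge_of_tendsto hlim ?_
  filter_upwards [Ioo_mem_nhdsGT one_pos] with t ht using h t ht.1 ht.2

section Objective

variable {d m n N : ℕ} {ε : ℝ} {f : Vec d → Vec m → ℝ} {ξhat : Fin N → Vec m}
  {v : Fin N → Fin n}

lemma iSup_gk_ne_bot (k : Fin N) (x : Vec d) (lam : ℝ) :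
    ⨆ ξ, ((gk f ξhat k x lam ξ : ℝ) : EReal) ≠ ⊥ :=
  ne_bot_of_le_ne_bot (EReal.coe_ne_bot _)
    (le_iSup (fun ξ => ((gk f ξhat k x lam ξ : ℝ) : EReal)) 0)

lemma iSup_gk_lineMap_le (hconv : ∀ ξ, ConvexOn ℝ Set.univ (fun x => f x ξ)) (k : Fin N)
    {x x' : Vec d} {lam lam' a b t : ℝ} (ht₀ : 0 ≤ t) (ht₁ : t ≤ 1)
    (ha : ⨆ ξ, ((gk f ξhat k x lam ξ : ℝ) : EReal) ≤ a)
    (hb : ⨆ ξ, ((gk f ξhat k x' lam' ξ : ℝ) : EReal) ≤ b) :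
    ⨆ ξ, ((gk f ξhat k ((1 - t) • x + t • x') ((1 - t) * lam + t * lam') ξ : ℝ) : EReal)
      ≤ ((1 - t) * a + t * b : ℝ) := by
  refine iSup_le fun ξ => EReal.coe_le_coe_iff.2 ?_
  have hξa := EReal.coe_le_coe_iff.1 ((le_iSup _ ξ).trans ha)
  have hξb := EReal.coe_le_coe_iff.1 ((le_iSup _ ξ).trans hb)
  have hf := (hconv ξ).2 (Set.mem_univ x) (Set.mem_univ x') (sub_nonneg.2 ht₁) ht₀ (by ring)
  simp only [gk, smul_eq_mul] at hξa hξb hf ⊢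
  nlinarith [mul_le_mul_of_nonneg_left hξa (sub_nonneg.2 ht₁), mul_le_mul_of_nonneg_left hξb ht₀]

lemma iSup_gk_ne_top_of_Fobj_ne_top {xv : Fin n → Vec d} {lv : Fin n → ℝ}
    (hF : Fobj ε f ξhat v xv lv ≠ ⊤) (k : Fin N) :
    ⨆ ξ, ((gk f ξhat k (xv (v k)) (lv (v k)) ξ : ℝ) : EReal) ≠ ⊤ := by
  refine EReal.ne_top_of_finset_sum_ne_top
    (g := fun k => ⨆ ξ, ((gk f ξhat k (xv (v k)) (lv (v k)) ξ : ℝ) : EReal))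
    (fun k _ => iSup_gk_ne_bot k _ _) ?_ k (Finset.mem_univ k)
  intro htop
  have hN : (0 : ℝ) < 1 / N := by have := k.pos; positivity
  rw [Fobj, htop, EReal.coe_mul_top_of_pos hN, EReal.coe_add_top] at hF
  exact hF rfl

lemma Fobj_eq_coe {xv : Fin n → Vec d} {lv : Fin n → ℝ} (hF : Fobj ε f ξhat v xv lv ≠ ⊤) :
    Fobj ε f ξhat v xv lv = ((ε ^ 2 / n * ∑ i, lv i
      + 1 / N * ∑ k, (⨆ ξ, ((gk f ξhat k (xv (v k)) (lv (v k)) ξ : ℝ) : EReal)).toReal : ℝ)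
      : EReal) := by
  have hS : ∀ k, ⨆ ξ, ((gk f ξhat k (xv (v k)) (lv (v k)) ξ : ℝ) : EReal)
      = ((⨆ ξ, ((gk f ξhat k (xv (v k)) (lv (v k)) ξ : ℝ) : EReal)).toReal : EReal) :=
    fun k => (EReal.coe_toReal (iSup_gk_ne_top_of_Fobj_ne_top hF k) (iSup_gk_ne_bot k _ _)).symm
  rw [Fobj, Finset.sum_congr rfl fun k _ => hS k]
  push_cast
  rfl

lemma Fobj_lineMap_le (hconv : ∀ ξ, ConvexOn ℝ Set.univ (fun x => f x ξ))
    {xv xv' : Fin n → Vec d} {lv lv' : Fin n → ℝ} (hF : Fobj ε f ξhat v xv lv ≠ ⊤)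
    (hF' : Fobj ε f ξhat v xv' lv' ≠ ⊤) {t : ℝ} (ht₀ : 0 ≤ t) (ht₁ : t ≤ 1) :
    Fobj ε f ξhat v ((1 - t) • xv + t • xv') ((1 - t) • lv + t • lv')
      ≤ ((1 - t) * (Fobj ε f ξhat v xv lv).toReal
          + t * (Fobj ε f ξhat v xv' lv').toReal : ℝ) := by
  rw [Fobj_eq_coe hF, Fobj_eq_coe hF', EReal.toReal_coe, EReal.toReal_coe]
  set s := fun k => (⨆ ξ, ((gk f ξhat k (xv (v k)) (lv (v k)) ξ : ℝ) : EReal)).toReal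
  set s' := fun k => (⨆ ξ, ((gk f ξhat k (xv' (v k)) (lv' (v k)) ξ : ℝ) : EReal)).toReal
  have hsum : ∑ k, ⨆ ξ, ((gk f ξhat k (((1 - t) • xv + t • xv') (v k))
        (((1 - t) • lv + t • lv') (v k)) ξ : ℝ) : EReal)
      ≤ ((∑ k, ((1 - t) * s k + t * s' k) : ℝ) : EReal) := by
    push_cast
    exact Finset.sum_le_sum fun k _ => iSup_gk_lineMap_le hconv k ht₀ ht₁
      (EReal.coe_toReal (iSup_gk_ne_top_of_Fobj_ne_top hF k) (iSup_gk_ne_bot k _ _)).ge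
      (EReal.coe_toReal (iSup_gk_ne_top_of_Fobj_ne_top hF' k) (iSup_gk_ne_bot k _ _)).ge
  calc Fobj ε f ξhat v ((1 - t) • xv + t • xv') ((1 - t) • lv + t • lv')
      ≤ ((ε ^ 2 / n * ∑ i, ((1 - t) • lv + t • lv') i : ℝ) : EReal)
          + ((1 / N : ℝ) : EReal) * ((∑ k, ((1 - t) * s k + t * s' k) : ℝ) : EReal) := by
        unfold Fobj
        gcongr
    _ = _ := by
        norm_cast
        simp only [Pi.add_apply, Pi.smul_apply, smul_eq_mul, Finset.sum_add_distrib,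
          ← Finset.mul_sum]
        ring

end Objective

section Lagrangian

variable {d m n N : ℕ} {ε : ℝ} {f : Vec d → Vec m → ℝ} {ξhat : Fin N → Vec m}
  {v : Fin N → Fin n} {Lap : Matrix (Fin n) (Fin n) ℝ}
  {xv xv' : Fin n → Vec d} {lv lv' ν : Fin n → ℝ} {η : Fin n → Vec d}

def penalty (Lap : Matrix (Fin n) (Fin n) ℝ) (xv : Fin n → Vec d) (lv : Fin n → ℝ) : ℝ :=
  1 / 2 * kronForm Lap xv xv + 1 / 2 * kronForm Lap lv lv

lemma penalty_nonneg (hLap : Lap.PosSemidef) (xv : Fin n → Vec d) (lv : Fin n → ℝ) :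
    0 ≤ penalty Lap xv lv := by
  unfold penalty
  have := kronForm_self_nonneg hLap xv
  have := kronForm_self_nonneg hLap lv
  positivity

lemma penalty_eq_zero (hl : kronMulVec Lap lv = 0) (hx : kronMulVec Lap xv = 0) :
    penalty Lap xv lv = 0 := by
  simp [penalty, kronForm_eq_zero_of_kronMulVec_eq_zero, hl, hx]

lemma penalty_lineMap (hLap : Lap.IsSymm) (hl : kronMulVec Lap lv = 0)
    (hx : kronMulVec Lap xv = 0) (t : ℝ) :
    penalty Lap ((1 - t) • xv + t • xv') ((1 - t) • lv + t • lv')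
      = t ^ 2 * penalty Lap xv' lv' := by
  simp only [penalty, kronForm_lineMap_self hLap hl, kronForm_lineMap_self hLap hx]
  ring

lemma Lagr_eq (xv : Fin n → Vec d) (lv ν : Fin n → ℝ) (η : Fin n → Vec d) :
    Lagr ε f ξhat v Lap xv lv ν η
      = Fobj ε f ξhat v xv lv + (kronForm Lap ν lv + kronForm Lap η xv : ℝ) := by
  rw [kronForm_real]
  simp only [Lagr, kronForm, kronMulVec_apply]

lemma LagrAug_eq (xv : Fin n → Vec d) (lv ν : Fin n → ℝ) (η : Fin n → Vec d) :
    LagrAug ε f ξhat v Lap xv lv ν η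
      = Lagr ε f ξhat v Lap xv lv ν η + (penalty Lap xv lv : ℝ) := by
  rw [penalty, kronForm_real]
  simp only [LagrAug, kronForm, kronMulVec_apply]

lemma Lagr_eq_top_iff : Lagr ε f ξhat v Lap xv lv ν η = ⊤ ↔ Fobj ε f ξhat v xv lv = ⊤ := by
  rw [Lagr_eq, ← not_iff_not]
  exact EReal.add_ne_top_iff_ne_top_left (EReal.coe_ne_bot _) (EReal.coe_ne_top _)

lemma LagrAug_eq_top_iff :
    LagrAug ε f ξhat v Lap xv lv ν η = ⊤ ↔ Fobj ε f ξhat v xv lv = ⊤ := by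
  rw [LagrAug_eq, ← Lagr_eq_top_iff, ← not_iff_not]
  exact EReal.add_ne_top_iff_ne_top_left (EReal.coe_ne_bot _) (EReal.coe_ne_top _)

lemma Lagr_eq_coe (hF : Fobj ε f ξhat v xv lv ≠ ⊤) :
    Lagr ε f ξhat v Lap xv lv ν η
      = ((Fobj ε f ξhat v xv lv).toReal + kronForm Lap ν lv + kronForm Lap η xv : ℝ) := by
  rw [Lagr_eq, Fobj_eq_coe hF, EReal.toReal_coe, ← EReal.coe_add, ← add_assoc]

lemma Lagr_le_LagrAug (hLap : Lap.PosSemidef) (xv : Fin n → Vec d) (lv ν : Fin n → ℝ)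
    (η : Fin n → Vec d) : Lagr ε f ξhat v Lap xv lv ν η ≤ LagrAug ε f ξhat v Lap xv lv ν η := by
  rw [LagrAug_eq]
  exact le_add_of_nonneg_right (EReal.coe_nonneg.2 (penalty_nonneg hLap xv lv))

lemma LagrAug_eq_Lagr (hl : kronMulVec Lap lv = 0) (hx : kronMulVec Lap xv = 0)
    (ν : Fin n → ℝ) (η : Fin n → Vec d) :
    LagrAug ε f ξhat v Lap xv lv ν η = Lagr ε f ξhat v Lap xv lv ν η := by
  rw [LagrAug_eq, penalty_eq_zero hl hx, EReal.coe_zero, add_zero]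

lemma forall_LagrAug_le_iff :
    (∀ ν' η', LagrAug ε f ξhat v Lap xv lv ν' η' ≤ LagrAug ε f ξhat v Lap xv lv ν η) ↔
      ∀ ν' η', Lagr ε f ξhat v Lap xv lv ν' η' ≤ Lagr ε f ξhat v Lap xv lv ν η := by
  simp only [LagrAug_eq, (EReal.addLECancellable_coe _).add_le_add_iff_right]

lemma kronMulVec_eq_zero_of_forall_Lagr_le (hF : Fobj ε f ξhat v xv lv ≠ ⊤)
    (hmax : ∀ ν' η', Lagr ε f ξhat v Lap xv lv ν' η' ≤ Lagr ε f ξhat v Lap xv lv ν η) :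
    kronMulVec Lap lv = 0 ∧ kronMulVec Lap xv = 0 := by
  have hlin : ∀ ν' η', kronForm Lap ν' lv + kronForm Lap η' xv
      ≤ kronForm Lap ν lv + kronForm Lap η xv := fun ν' η' => by
    simpa only [Lagr_eq_coe hF, EReal.coe_le_coe_iff, add_assoc, add_le_add_iff_left]
      using hmax ν' η'
  exact ⟨kronMulVec_eq_zero_of_forall_kronForm_le fun ν' => by simpa using hlin ν' η,
    kronMulVec_eq_zero_of_forall_kronForm_le fun η' => by simpa using hlin ν η'⟩

lemma LagrAug_lineMap_le (hconv : ∀ ξ, ConvexOn ℝ Set.univ (fun x => f x ξ))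
    (hLap : Lap.IsSymm) (hl : kronMulVec Lap lv = 0) (hx : kronMulVec Lap xv = 0)
    (hF : Fobj ε f ξhat v xv lv ≠ ⊤) (hF' : Fobj ε f ξhat v xv' lv' ≠ ⊤)
    {t : ℝ} (ht₀ : 0 ≤ t) (ht₁ : t ≤ 1) :
    LagrAug ε f ξhat v Lap ((1 - t) • xv + t • xv') ((1 - t) • lv + t • lv') ν η
      ≤ ((1 - t) * (Lagr ε f ξhat v Lap xv lv ν η).toReal
          + t * (Lagr ε f ξhat v Lap xv' lv' ν η).toReal + t ^ 2 * penalty Lap xv' lv' : ℝ) := by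
  rw [LagrAug_eq, Lagr_eq, Lagr_eq_coe hF, Lagr_eq_coe hF', EReal.toReal_coe, EReal.toReal_coe,
    penalty_lineMap hLap hl hx, kronForm_smul_add_smul_right, kronForm_smul_add_smul_right]
  calc _ ≤ (((1 - t) * (Fobj ε f ξhat v xv lv).toReal
          + t * (Fobj ε f ξhat v xv' lv').toReal : ℝ) : EReal)
        + (((1 - t) * kronForm Lap ν lv + t * kronForm Lap ν lv'
          + ((1 - t) * kronForm Lap η xv + t * kronForm Lap η xv') : ℝ) : EReal)
        + ((t ^ 2 * penalty Lap xv' lv' : ℝ) : EReal) := by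
        gcongr
        exact Fobj_lineMap_le hconv hF hF' ht₀ ht₁
    _ = _ := by
        norm_cast
        ring_nf

lemma Lagr_le_of_forall_LagrAug_le (hconv : ∀ ξ, ConvexOn ℝ Set.univ (fun x => f x ξ))
    (hLap : Lap.IsSymm) (hl : kronMulVec Lap lv = 0) (hx : kronMulVec Lap xv = 0)
    (hlv : ∀ i, 0 ≤ lv i) (hF : Fobj ε f ξhat v xv lv ≠ ⊤)
    (hmin : ∀ (xv' : Fin n → Vec d) (lv' : Fin n → ℝ), (∀ i, 0 ≤ lv' i) →
      LagrAug ε f ξhat v Lap xv lv ν η ≤ LagrAug ε f ξhat v Lap xv' lv' ν η)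
    (xv' : Fin n → Vec d) (lv' : Fin n → ℝ) (hlv' : ∀ i, 0 ≤ lv' i) :
    Lagr ε f ξhat v Lap xv lv ν η ≤ Lagr ε f ξhat v Lap xv' lv' ν η := by
  by_cases hF' : Fobj ε f ξhat v xv' lv' = ⊤
  · rw [Lagr_eq_top_iff.2 hF']
    exact le_top
  obtain ⟨a, ha⟩ : ∃ a : ℝ, Lagr ε f ξhat v Lap xv lv ν η = a := ⟨_, Lagr_eq_coe hF⟩
  obtain ⟨b, hb⟩ : ∃ b : ℝ, Lagr ε f ξhat v Lap xv' lv' ν η = b := ⟨_, Lagr_eq_coe hF'⟩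
  rw [ha, hb, EReal.coe_le_coe_iff]
  refine le_of_forall_le_add_mul (C := penalty Lap xv' lv') fun t ht₀ ht₁ => ?_
  have hseg := (hmin _ _ fun i => add_nonneg (mul_nonneg (by linarith) (hlv i))
    (mul_nonneg ht₀.le (hlv' i))).trans
    (LagrAug_lineMap_le hconv hLap hl hx hF hF' ht₀.le ht₁.le)
  rw [LagrAug_eq_Lagr hl hx, ha, hb, EReal.toReal_coe, EReal.toReal_coe,
    EReal.coe_le_coe_iff] at hseg
  nlinarith

end Lagrangian

theorem saddle_L_iff_saddle_Laug_general
    {d m n N : ℕ}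
    (f : Vec d → Vec m → ℝ) (ξhat : Fin N → Vec m) (ε : ℝ)
    (hconv : ∀ ξ : Vec m, ConvexOn ℝ Set.univ (fun x => f x ξ))
    (v : Fin N → Fin n)
    (Lap : Matrix (Fin n) (Fin n) ℝ) (hLpsd : Lap.PosSemidef)
    (xv : Fin n → Vec d) (lv ν : Fin n → ℝ) (η : Fin n → Vec d) :
    IsSaddleLagr ε f ξhat v Lap xv lv ν η ↔
      IsSaddleLagrAug ε f ξhat v Lap xv lv ν η := by
  refine and_congr_right fun hlv => ?_
  rw [forall_LagrAug_le_iff]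
  refine and_congr_right fun hmax => ?_
  by_cases hF : Fobj ε f ξhat v xv lv = ⊤
  · simp only [Lagr_eq_top_iff.2 hF, LagrAug_eq_top_iff.2 hF, top_le_iff, Lagr_eq_top_iff,
      LagrAug_eq_top_iff]
  obtain ⟨hl, hx⟩ := kronMulVec_eq_zero_of_forall_Lagr_le hF hmax
  have hLsym : Lap.IsSymm := Matrix.isHermitian_iff_isSymm.1 hLpsd.isHermitian
  exact ⟨fun hmin xv' lv' hlv' => (LagrAug_eq_Lagr hl hx ν η).trans_le
      ((hmin xv' lv' hlv').trans (Lagr_le_LagrAug hLpsd _ _ _ _)),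
    fun hmin => Lagr_le_of_forall_LagrAug_le hconv hLsym hl hx hlv hF hmin⟩

/-- (x_v*, λ_v*, ν*, η*) is a saddle point of L over
(ℝ^{nd} × ℝ_{≥0}ⁿ) × (ℝⁿ × ℝ^{nd}) iff it is a saddle point of L_aug over the same
domain. -/
theorem saddle_L_iff_saddle_Laug
    {d m n N : ℕ} (hn : 0 < n) (hN : 0 < N)
    (f : Vec d → Vec m → ℝ) (ξhat : Fin N → Vec m) (ε : ℝ) (hε : 0 < ε)
    (hf : ContDiff ℝ 1 (Function.uncurry f))
    (hconv : ∀ ξ : Vec m, ConvexOn ℝ Set.univ (fun x => f x ξ))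
    (v : Fin N → Fin n) (hv : Function.Surjective v)
    (Lap : Matrix (Fin n) (Fin n) ℝ) (hLsym : Lap.IsSymm) (hLpsd : Lap.PosSemidef)
    (hLker : ∀ w : Fin n → ℝ, Lap.mulVec w = 0 ↔ ∃ c : ℝ, w = fun _ => c)
    (xv : Fin n → Vec d) (lv ν : Fin n → ℝ) (η : Fin n → Vec d) :
    IsSaddleLagr ε f ξhat v Lap xv lv ν η ↔
      IsSaddleLagrAug ε f ξhat v Lap xv lv ν η :=
  saddle_L_iff_saddle_Laug_general f ξhat ε hconv v Lap hLpsd xv lv ν η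
end
end

section
/- Let f(x, ξ) := ξᵀQξ + xᵀRξ + ℓ(x), where Q ∈ ℝ^{m×m} is symmetric positive definite, R ∈ ℝ^{d×m}, and ℓ : ℝ^d → ℝ is convex and continuously differentiable, and let C := ℝ^{nd} × {λ_v ∈ ℝⁿ : λ^i ≥ λ_max(Q) for all i}, where λ_max(Q) is the largest eigenvalue of Q. Then L̃_aug is convex-concave on C × (ℝⁿ × ℝ^{nd} × ℝ^{mN}): for each fixed (ν, η, {ξ^k}), the map (x_v, λ_v) ↦ L̃_aug is convex on C, and for each fixed (x_v, λ_v) ∈ C, the map (ν, η, {ξ^k}) ↦ L̃_aug is concave on ℝⁿ × ℝ^{nd} × ℝ^{mN}. -/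
open scoped BigOperators RealInnerProductSpace
open Finset

noncomputable section

/-! The penalty terms `½ x_vᵀ(𝖫 ⊗ I_d)x_v` and `½ λ_vᵀ𝖫λ_v` are positive semidefinite quadratic
forms, hence convex, and the terms coupling `ν`, `η` to the primal variables are bilinear, so
everything reduces to the `g_k`. In `(x, λ)`, `g_k` is `ℓ` plus an affine function. In `ξ`,
`g_k = -ξᵀ(λI - Q)ξ + (affine in ξ)`, and `λI - Q` is positive semidefinite as soon as `λ`
bounds every eigenvalue of `Q`, which the constraint `λ^i ≥ λ_max(Q)` guarantees. -/

open Matrix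

theorem convexOn_finset_sum {𝕜 E β ι : Type*} [Semiring 𝕜] [PartialOrder 𝕜] [AddCommMonoid E]
    [AddCommMonoid β] [PartialOrder β] [IsOrderedAddMonoid β] [Module 𝕜 E] [Module 𝕜 β]
    {s : Set E} (hs : Convex 𝕜 s) (t : Finset ι) {f : ι → E → β}
    (hf : ∀ i ∈ t, ConvexOn 𝕜 s (f i)) : ConvexOn 𝕜 s fun x => ∑ i ∈ t, f i x := by
  classical
  induction t using Finset.induction_on with
  | empty => simpa using convexOn_const 0 hs
  | insert i t hi ih =>
    simp_rw [Finset.sum_insert hi]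
    exact (hf i (Finset.mem_insert_self i t)).add
      (ih fun j hj => hf j (Finset.mem_insert_of_mem hj))

theorem concaveOn_finset_sum {𝕜 E β ι : Type*} [Semiring 𝕜] [PartialOrder 𝕜] [AddCommMonoid E]
    [AddCommMonoid β] [PartialOrder β] [IsOrderedAddMonoid β] [Module 𝕜 E] [Module 𝕜 β]
    {s : Set E} (hs : Convex 𝕜 s) (t : Finset ι) {f : ι → E → β}
    (hf : ∀ i ∈ t, ConcaveOn 𝕜 s (f i)) : ConcaveOn 𝕜 s fun x => ∑ i ∈ t, f i x :=
  convexOn_finset_sum (β := βᵒᵈ) hs t hf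

namespace LinearMap.BilinForm

variable {E F : Type*} [AddCommGroup E] [Module ℝ E] [AddCommGroup F] [Module ℝ F]

theorem IsPosSemidef.convexOn_apply_self {B : LinearMap.BilinForm ℝ E} (hB : B.IsPosSemidef) :
    ConvexOn ℝ Set.univ fun x => B x x := by
  refine ⟨convex_univ, fun x _ y _ a b ha hb hab => ?_⟩
  -- for `a + b = 1`: `a B x x + b B y y - B (a x + b y) (a x + b y) = a b B (x - y) (x - y)`
  have key := mul_nonneg (mul_nonneg ha hb) (hB.nonneg (x - y))
  simp only [map_add, map_sub, map_smul, LinearMap.add_apply, LinearMap.sub_apply,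
    LinearMap.smul_apply, smul_eq_mul, hB.isSymm.eq y x] at key ⊢
  linear_combination key + (a * B x x + b * B y y) * hab

theorem IsPosSemidef.compl₁₂ {B : LinearMap.BilinForm ℝ F} (hB : B.IsPosSemidef) (g : E →ₗ[ℝ] F) :
    LinearMap.BilinForm.IsPosSemidef (B.compl₁₂ g g) where
  isSymm := ⟨fun x y => hB.isSymm.eq (g x) (g y)⟩
  isNonneg := ⟨fun x => hB.nonneg (g x)⟩

end LinearMap.BilinForm

section MatrixForms

variable {ι : Type*} [Fintype ι] [DecidableEq ι]

theorem Matrix.IsSymm.isSymm_toLinearMap₂' {A : Matrix ι ι ℝ} (hA : A.IsSymm) :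
    LinearMap.BilinForm.IsSymm (toLinearMap₂' ℝ A) :=
  ⟨fun x y => by
    rw [toLinearMap₂'_apply', toLinearMap₂'_apply', dotProduct_mulVec, ← mulVec_transpose, hA.eq,
      dotProduct_comm]⟩

theorem Matrix.PosSemidef.isPosSemidef_toLinearMap₂' {A : Matrix ι ι ℝ} (hA : A.PosSemidef) :
    LinearMap.BilinForm.IsPosSemidef (toLinearMap₂' ℝ A) where
  isSymm := (isHermitian_iff_isSymm.1 hA.1).isSymm_toLinearMap₂'
  isNonneg := ⟨fun x => by simpa [toLinearMap₂'_apply'] using hA.dotProduct_mulVec_nonneg x⟩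

theorem Matrix.IsHermitian.posSemidef_smul_one_sub {A : Matrix ι ι ℝ} (hA : A.IsHermitian) {c : ℝ}
    (hc : c ∈ upperBounds {μ : ℝ | ∃ w : ι → ℝ, w ≠ 0 ∧ A *ᵥ w = μ • w}) :
    (c • 1 - A).PosSemidef := by
  have hB : (c • 1 - A).IsHermitian := by
    rw [isHermitian_iff_isSymm] at hA ⊢
    exact (isSymm_one.smul c).sub hA
  rw [hB.posSemidef_iff_eigenvalues_nonneg]
  intro i
  have hev := hB.mulVec_eigenvectorBasis i
  rw [sub_mulVec, smul_mulVec, one_mulVec, sub_eq_iff_eq_add, ← sub_eq_iff_eq_add', ← sub_smul]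
    at hev
  have hne : (hB.eigenvectorBasis i).ofLp ≠ 0 := by
    simpa using hB.eigenvectorBasis.orthonormal.ne_zero i
  have := hc ⟨_, hne, hev.symm⟩
  simp only [Pi.zero_apply]
  linarith

end MatrixForms

def euclideanForm {d m : ℕ} (A : Matrix (Fin d) (Fin m) ℝ) : Vec d →ₗ[ℝ] Vec m →ₗ[ℝ] ℝ :=
  (toLinearMap₂' ℝ A).compl₁₂ (WithLp.linearEquiv 2 ℝ (Fin d → ℝ)).toLinearMap
    (WithLp.linearEquiv 2 ℝ (Fin m → ℝ)).toLinearMap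

theorem euclideanForm_apply {d m : ℕ} (A : Matrix (Fin d) (Fin m) ℝ) (x : Vec d) (y : Vec m) :
    euclideanForm A x y = ∑ i, ∑ j, x i * A i j * y j := by
  simp only [euclideanForm, LinearMap.compl₁₂_apply, toLinearMap₂'_apply, smul_eq_mul]
  exact Finset.sum_congr rfl fun i _ => Finset.sum_congr rfl fun j _ => by simp; ring

theorem euclideanForm_one {m : ℕ} (x : Vec m) : euclideanForm 1 x x = ‖x‖ ^ 2 := by
  rw [← real_inner_self_eq_norm_sq, EuclideanSpace.inner_eq_star_dotProduct]
  simp [euclideanForm, toLinearMap₂'_apply']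

theorem euclideanForm_smul_one_sub {m : ℕ} (c : ℝ) (Q : Matrix (Fin m) (Fin m) ℝ) (ξ : Vec m) :
    euclideanForm (c • 1 - Q) ξ ξ = c * ‖ξ‖ ^ 2 - euclideanForm Q ξ ξ := by
  rw [← euclideanForm_one]
  simp [euclideanForm]

/-- The form `yᵀ (L ⊗ I_d) z` on `(ℝ^d)ⁿ`. -/
def kronIdForm {n d : ℕ} (L : Matrix (Fin n) (Fin n) ℝ) :
    LinearMap.BilinForm ℝ (Fin n → Vec d) :=
  LinearMap.mk₂ ℝ (fun y z => ∑ i, ⟪y i, ∑ j, L i j • z j⟫)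
    (fun _ _ _ => by simp [inner_add_left, Finset.sum_add_distrib])
    (fun _ _ _ => by simp [real_inner_smul_left, Finset.mul_sum])
    (fun _ _ _ => by simp [inner_add_right, Finset.sum_add_distrib, smul_add])
    (fun _ _ _ => by
      simp [real_inner_smul_right, inner_sum, Finset.mul_sum, smul_smul, mul_comm, mul_assoc])

theorem kronIdForm_apply {n d : ℕ} (L : Matrix (Fin n) (Fin n) ℝ) (y z : Fin n → Vec d) :
    kronIdForm L y z = ∑ t, toLinearMap₂' ℝ L (fun i => y i t) (fun i => z i t) := by
  simp only [kronIdForm, LinearMap.mk₂_apply, toLinearMap₂'_apply, smul_eq_mul, inner_sum,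
    PiLp.inner_apply, RCLike.inner_apply, conj_trivial]
  conv_rhs => rw [Finset.sum_comm]
  refine Finset.sum_congr rfl fun i _ => ?_
  rw [Finset.sum_comm]
  exact Finset.sum_congr rfl fun j _ => Finset.sum_congr rfl fun t _ => by simp; ring

theorem Matrix.PosSemidef.isPosSemidef_kronIdForm {n d : ℕ} {L : Matrix (Fin n) (Fin n) ℝ}
    (hL : L.PosSemidef) : (kronIdForm (d := d) L).IsPosSemidef where
  isSymm := ⟨fun y z => by
    rw [kronIdForm_apply, kronIdForm_apply]
    exact Finset.sum_congr rfl fun t _ => hL.isPosSemidef_toLinearMap₂'.isSymm.eq _ _⟩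
  isNonneg := ⟨fun y => by
    rw [kronIdForm_apply]
    exact Finset.sum_nonneg fun t _ => hL.isPosSemidef_toLinearMap₂'.nonneg _⟩

section Ltld

variable {d m n N : ℕ} (ε : ℝ) (f : Vec d → Vec m → ℝ) (ξhat : Fin N → Vec m)
  (v : Fin N → Fin n) (Lap : Matrix (Fin n) (Fin n) ℝ)

theorem Ltld_eq (xv : Fin n → Vec d) (lv : Fin n → ℝ) (ν : Fin n → ℝ) (η : Fin n → Vec d)
    (ξs : Fin N → Vec m) :
    Ltld ε f ξhat v Lap xv lv ν η ξs =
      ε ^ 2 / n * ∑ i, lv i + 1 / N * ∑ k, gk f ξhat k (xv (v k)) (lv (v k)) (ξs k)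
        + toLinearMap₂' ℝ Lap ν lv + kronIdForm Lap η xv + 1 / 2 * kronIdForm Lap xv xv
        + 1 / 2 * toLinearMap₂' ℝ Lap lv lv := by
  simp only [Ltld, toLinearMap₂'_apply']
  rfl

theorem gk_convexOn (hf : ∀ ξ, ConvexOn ℝ Set.univ (f · ξ)) (k : Fin N) (ξ : Vec m) :
    ConvexOn ℝ Set.univ fun p : Vec d × ℝ => gk f ξhat k p.1 p.2 ξ :=
  ((hf ξ).comp_linearMap (LinearMap.fst ℝ _ _)).sub
    (((LinearMap.snd ℝ (Vec d) ℝ).smulRight (‖ξ - ξhat k‖ ^ 2)).concaveOn convex_univ)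

theorem Ltld_convexOn (hL : Lap.PosSemidef)
    (hg : ∀ k ξ, ConvexOn ℝ Set.univ fun p : Vec d × ℝ => gk f ξhat k p.1 p.2 ξ)
    (ν : Fin n → ℝ) (η : Fin n → Vec d) (ξs : Fin N → Vec m) :
    ConvexOn ℝ Set.univ fun p : (Fin n → Vec d) × (Fin n → ℝ) =>
      Ltld ε f ξhat v Lap p.1 p.2 ν η ξs := by
  simp only [Ltld_eq]
  have hsum : ConvexOn ℝ Set.univ fun p : (Fin n → Vec d) × (Fin n → ℝ) => ∑ i, p.2 i :=
    convexOn_finset_sum convex_univ _ fun i _ =>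
      ((LinearMap.proj i).comp (LinearMap.snd ℝ _ _)).convexOn convex_univ
  have hgsum : ConvexOn ℝ Set.univ fun p : (Fin n → Vec d) × (Fin n → ℝ) =>
      ∑ k, gk f ξhat k (p.1 (v k)) (p.2 (v k)) (ξs k) :=
    convexOn_finset_sum convex_univ _ fun k _ =>
      (hg k (ξs k)).comp_linearMap ((LinearMap.proj (R := ℝ) (φ := fun _ => Vec d) (v k)).prodMap
        (LinearMap.proj (R := ℝ) (φ := fun _ => ℝ) (v k)))
  exact (((((hsum.smul (by positivity)).add (hgsum.smul (by positivity))).add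
    (((toLinearMap₂' ℝ Lap ν).comp (LinearMap.snd ℝ _ _)).convexOn convex_univ)).add
    (((kronIdForm Lap η).comp (LinearMap.fst ℝ _ _)).convexOn convex_univ)).add
    ((hL.isPosSemidef_kronIdForm.convexOn_apply_self.comp_linearMap
      (LinearMap.fst ℝ _ _)).smul (by norm_num))).add
    ((hL.isPosSemidef_toLinearMap₂'.convexOn_apply_self.comp_linearMap
      (LinearMap.snd ℝ _ _)).smul (by norm_num))

theorem Ltld_concaveOn (xv : Fin n → Vec d) (lv : Fin n → ℝ)
    (hg : ∀ k, ConcaveOn ℝ Set.univ (gk f ξhat k (xv (v k)) (lv (v k)))) :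
    ConcaveOn ℝ Set.univ fun q : (Fin n → ℝ) × (Fin n → Vec d) × (Fin N → Vec m) =>
      Ltld ε f ξhat v Lap xv lv q.1 q.2.1 q.2.2 := by
  simp only [Ltld_eq]
  have hgsum : ConcaveOn ℝ Set.univ fun q : (Fin n → ℝ) × (Fin n → Vec d) × (Fin N → Vec m) =>
      ∑ k, gk f ξhat k (xv (v k)) (lv (v k)) (q.2.2 k) :=
    concaveOn_finset_sum convex_univ _ fun k _ =>
      (hg k).comp_linearMap ((LinearMap.proj (R := ℝ) (φ := fun _ => Vec m) k).comp
        ((LinearMap.snd ℝ _ _).comp (LinearMap.snd ℝ _ _)))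
  exact (((((concaveOn_const _ convex_univ).add (hgsum.smul (by positivity))).add
    ((((toLinearMap₂' ℝ Lap).flip lv).comp (LinearMap.fst ℝ _ _)).concaveOn convex_univ)).add
    ((((kronIdForm Lap).flip xv).comp ((LinearMap.fst ℝ _ _).comp (LinearMap.snd ℝ _ _))).concaveOn
      convex_univ)).add (concaveOn_const _ convex_univ)).add (concaveOn_const _ convex_univ)

end Ltld

section Quadratic

variable {d m : ℕ} {Q : Matrix (Fin m) (Fin m) ℝ} {R : Matrix (Fin d) (Fin m) ℝ}
  {ℓ : Vec d → ℝ} {f : Vec d → Vec m → ℝ}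

theorem convexOn_left_of_quadratic (hℓ : ConvexOn ℝ Set.univ ℓ)
    (hf : ∀ x ξ, f x ξ = (∑ i, ∑ j, ξ i * Q i j * ξ j) + (∑ i, ∑ j, x i * R i j * ξ j) + ℓ x)
    (ξ : Vec m) : ConvexOn ℝ Set.univ (f · ξ) := by
  simp only [hf, ← euclideanForm_apply]
  exact ((convexOn_const _ convex_univ).add
    (((euclideanForm R).flip ξ).convexOn convex_univ)).add hℓ

theorem gk_concaveOn_of_quadratic {N : ℕ} (ξhat : Fin N → Vec m) (hQ : Q.IsSymm)
    (hf : ∀ x ξ, f x ξ = (∑ i, ∑ j, ξ i * Q i j * ξ j) + (∑ i, ∑ j, x i * R i j * ξ j) + ℓ x)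
    {lam : ℝ} (hlam : lam ∈ upperBounds {μ : ℝ | ∃ w : Fin m → ℝ, w ≠ 0 ∧ Q *ᵥ w = μ • w})
    (k : Fin N) (x : Vec d) : ConcaveOn ℝ Set.univ (gk f ξhat k x lam) := by
  have hpsd : LinearMap.BilinForm.IsPosSemidef (euclideanForm (lam • 1 - Q)) :=
    ((isHermitian_iff_isSymm.2 hQ).posSemidef_smul_one_sub hlam).isPosSemidef_toLinearMap₂'.compl₁₂
      _
  have hdecomp : gk f ξhat k x lam = fun ξ => -euclideanForm (lam • 1 - Q) ξ ξ
      + (euclideanForm R x ξ + (2 * lam) • innerₗ (Vec m) (ξhat k) ξ)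
      + (ℓ x - lam * ‖ξhat k‖ ^ 2) := by
    funext ξ
    simp only [gk, hf, euclideanForm_smul_one_sub, ← euclideanForm_apply, norm_sub_sq_real,
      innerₗ_apply_apply, smul_eq_mul, real_inner_comm ξ]
    ring
  rw [hdecomp]
  exact (hpsd.convexOn_apply_self.neg.add
    ((euclideanForm R x + (2 * lam) • innerₗ (Vec m) (ξhat k)).concaveOn convex_univ)).add_const _

end Quadratic

theorem Ltld_convex_concave_of_quadratic_f_general
    {d m n N : ℕ}
    (Q : Matrix (Fin m) (Fin m) ℝ) (hQsym : Q.IsSymm)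
    (R : Matrix (Fin d) (Fin m) ℝ) (ℓ : Vec d → ℝ)
    (hℓconv : ConvexOn ℝ Set.univ ℓ)
    (lmax : ℝ)
    (hlmax : IsGreatest {μ : ℝ | ∃ w : Fin m → ℝ, w ≠ 0 ∧ Q.mulVec w = μ • w} lmax)
    (f : Vec d → Vec m → ℝ)
    (hf : ∀ (x : Vec d) (ξ : Vec m),
      f x ξ = (∑ i : Fin m, ∑ j : Fin m, ξ i * Q i j * ξ j)
        + (∑ i : Fin d, ∑ j : Fin m, x i * R i j * ξ j) + ℓ x)
    (ξhat : Fin N → Vec m) (ε : ℝ)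
    (v : Fin N → Fin n)
    (Lap : Matrix (Fin n) (Fin n) ℝ) (hLpsd : Lap.PosSemidef) :
    (∀ (ν : Fin n → ℝ) (η : Fin n → Vec d) (ξs : Fin N → Vec m),
      ConvexOn ℝ {p : (Fin n → Vec d) × (Fin n → ℝ) | ∀ i, lmax ≤ p.2 i}
        (fun p => Ltld ε f ξhat v Lap p.1 p.2 ν η ξs)) ∧
    (∀ (xv : Fin n → Vec d) (lv : Fin n → ℝ), (∀ i, lmax ≤ lv i) →
      ConcaveOn ℝ Set.univ
        (fun q : (Fin n → ℝ) × (Fin n → Vec d) × (Fin N → Vec m) =>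
          Ltld ε f ξhat v Lap xv lv q.1 q.2.1 q.2.2)) := by
  have hC : Convex ℝ {p : (Fin n → Vec d) × (Fin n → ℝ) | ∀ i, lmax ≤ p.2 i} :=
    (convex_Ici fun _ => lmax).linear_preimage (LinearMap.snd ℝ _ _)
  refine ⟨fun ν η ξs => ?_, fun xv lv hlv => ?_⟩
  · have hg := gk_convexOn f ξhat (convexOn_left_of_quadratic hℓconv hf)
    exact (Ltld_convexOn ε f ξhat v Lap hLpsd hg ν η ξs).subset (Set.subset_univ _) hC
  · refine Ltld_concaveOn ε f ξhat v Lap xv lv fun k =>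
      gk_concaveOn_of_quadratic ξhat hQsym hf (fun μ hμ => ?_) k _
    exact (hlmax.2 hμ).trans (hlv (v k))

/-- for f(x, ξ) = ξᵀQξ + xᵀRξ + ℓ(x) with Q symmetric positive definite
and C = ℝ^{nd} × {λ_v : λ^i ≥ λ_max(Q) ∀i}, L̃_aug is convex-concave on
C × (ℝⁿ × ℝ^{nd} × ℝ^{mN}). -/
theorem Ltld_convex_concave_of_quadratic_f
    {d m n N : ℕ} (hn : 0 < n) (hN : 0 < N)
    (Q : Matrix (Fin m) (Fin m) ℝ) (hQsym : Q.IsSymm) (hQpd : Q.PosDef)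
    (R : Matrix (Fin d) (Fin m) ℝ) (ℓ : Vec d → ℝ)
    (hℓconv : ConvexOn ℝ Set.univ ℓ) (hℓsmooth : ContDiff ℝ 1 ℓ)
    (lmax : ℝ)
    (hlmax : IsGreatest {μ : ℝ | ∃ w : Fin m → ℝ, w ≠ 0 ∧ Q.mulVec w = μ • w} lmax)
    (f : Vec d → Vec m → ℝ)
    (hf : ∀ (x : Vec d) (ξ : Vec m),
      f x ξ = (∑ i : Fin m, ∑ j : Fin m, ξ i * Q i j * ξ j)
        + (∑ i : Fin d, ∑ j : Fin m, x i * R i j * ξ j) + ℓ x)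
    (ξhat : Fin N → Vec m) (ε : ℝ) (hε : 0 < ε)
    (v : Fin N → Fin n) (hv : Function.Surjective v)
    (Lap : Matrix (Fin n) (Fin n) ℝ) (hLsym : Lap.IsSymm) (hLpsd : Lap.PosSemidef)
    (hLker : ∀ w : Fin n → ℝ, Lap.mulVec w = 0 ↔ ∃ c : ℝ, w = fun _ => c) :
    (∀ (ν : Fin n → ℝ) (η : Fin n → Vec d) (ξs : Fin N → Vec m),
      ConvexOn ℝ {p : (Fin n → Vec d) × (Fin n → ℝ) | ∀ i, lmax ≤ p.2 i}
        (fun p => Ltld ε f ξhat v Lap p.1 p.2 ν η ξs)) ∧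
    (∀ (xv : Fin n → Vec d) (lv : Fin n → ℝ), (∀ i, lmax ≤ lv i) →
      ConcaveOn ℝ Set.univ
        (fun q : (Fin n → ℝ) × (Fin n → Vec d) × (Fin N → Vec m) =>
          Ltld ε f ξhat v Lap xv lv q.1 q.2.1 q.2.2)) :=
  Ltld_convex_concave_of_quadratic_f_general Q hQsym R ℓ hℓconv lmax hlmax f hf ξhat ε v Lap hLpsd

end
end

section
/- Let d = m and f(x, ξ) := a(ξ_m − (ξ_{1:m−1}; 1)ᵀx)² with a > 0, where ξ_{1:m−1} denotes ξ without its last component and (ξ_{1:m−1}; 1) ∈ ℝ^m appends a 1, and let C := {(x_v, λ_v) ∈ ℝ^{nd} × ℝ_{≥0}ⁿ : λ^i ≥ a‖(x^i_{1:m−1}; 1)‖² for all i ∈ {1, …, n}}. Then C is closed and convex with nonempty interior, and L̃_aug is convex-concave on C × (ℝⁿ × ℝ^{nd} × ℝ^{mN}): for each fixed (ν, η, {ξ^k}), the map (x_v, λ_v) ↦ L̃_aug is convex on C, and for each fixed (x_v, λ_v) ∈ C, the map (ν, η, {ξ^k}) ↦ L̃_aug is concave on ℝⁿ × ℝ^{nd}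 × ℝ^{mN}. -/
open scoped BigOperators RealInnerProductSpace
open Finset

noncomputable section

/-!
In each of its two groups of variables `L̃_aug` is a quadratic polynomial, so along a segment
the Jensen gap `s φ x + t φ y - φ (s x + t y)` equals `s t D(x, y)` for an explicit `D`, and
convexity (concavity) comes down to the sign of `D`. In `(x_v, λ_v)` the gap is the sum of the squared
residual differences and the two Laplacian quadratic forms, all nonnegative because `𝖫 ⪰ 0`.
In `(ν, η, {ξᵏ})` it is `(1/N) Σₖ (a ⟨bₖ, Δξᵏ⟩² - λ^{vₖ} ‖Δξᵏ‖²)` with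
`bₖ = (-x^{vₖ}_{1:m-1}; 1)`, which is nonpositive by Cauchy–Schwarz as soon as
`λ^{vₖ} ≥ a ‖bₖ‖²`, the inequality defining `C`. The set `C` is the intersection of two sets
`{(x_v, λ_v) : g(xⁱ) ≤ λⁱ ∀ i}` with `g` continuous and convex, and `(0, (a + 1) 𝟙)` lies in its
interior.
-/

section JensenGap

variable {E F : Type*} [AddCommGroup E] [Module ℝ E] [AddCommGroup F] [Module ℝ F]

/-- `φ = Q + ℓ + c` with `Q` a quadratic form and `ℓ` linear satisfies this with
`D x y = Q (x - y)`. -/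
def HasJensenGap (φ : E → ℝ) (D : E → E → ℝ) : Prop :=
  ∀ x y : E, ∀ s t : ℝ, s + t = 1 → φ (s • x + t • y) = s * φ x + t * φ y - s * t * D x y

namespace HasJensenGap

variable {φ ψ : E → ℝ} {D D' : E → E → ℝ}

theorem convexOn (h : HasJensenGap φ D) (hD : ∀ x y, 0 ≤ D x y) : ConvexOn ℝ Set.univ φ :=
  ⟨convex_univ, fun x _ y _ s t hs ht hst => by
    rw [h x y s t hst, smul_eq_mul, smul_eq_mul]
    exact sub_le_self _ (mul_nonneg (mul_nonneg hs ht) (hD x y))⟩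

theorem concaveOn (h : HasJensenGap φ D) (hD : ∀ x y, D x y ≤ 0) : ConcaveOn ℝ Set.univ φ :=
  ⟨convex_univ, fun x _ y _ s t hs ht hst => by
    rw [h x y s t hst, smul_eq_mul, smul_eq_mul]
    exact (le_sub_self_iff _).2 (mul_nonpos_of_nonneg_of_nonpos (mul_nonneg hs ht) (hD x y))⟩

theorem add (hφ : HasJensenGap φ D) (hψ : HasJensenGap ψ D') :
    HasJensenGap (fun x => φ x + ψ x) (fun x y => D x y + D' x y) := fun x y s t hst => by
  dsimp only
  rw [hφ x y s t hst, hψ x y s t hst]; ring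

theorem sub (hφ : HasJensenGap φ D) (hψ : HasJensenGap ψ D') :
    HasJensenGap (fun x => φ x - ψ x) (fun x y => D x y - D' x y) := fun x y s t hst => by
  dsimp only
  rw [hφ x y s t hst, hψ x y s t hst]; ring

theorem const_mul (h : HasJensenGap φ D) (c : ℝ) :
    HasJensenGap (fun x => c * φ x) (fun x y => c * D x y) := fun x y s t hst => by
  dsimp only
  rw [h x y s t hst]; ring

theorem mul_const (h : HasJensenGap φ D) (c : ℝ) :
    HasJensenGap (fun x => φ x * c) (fun x y => D x y * c) := fun x y s t hst => by
  dsimp only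
  rw [h x y s t hst]; ring

theorem sum {ι : Type*} (u : Finset ι) {φ : ι → E → ℝ} {D : ι → E → E → ℝ}
    (h : ∀ i ∈ u, HasJensenGap (φ i) (D i)) :
    HasJensenGap (fun x => ∑ i ∈ u, φ i x) (fun x y => ∑ i ∈ u, D i x y) :=
  fun x y s t hst => by
    simp only [Finset.mul_sum, ← Finset.sum_add_distrib, ← Finset.sum_sub_distrib]
    exact Finset.sum_congr rfl fun i hi => h i hi x y s t hst

theorem sq (h : HasJensenGap φ fun _ _ => 0) :
    HasJensenGap (fun x => φ x ^ 2) (fun x y => (φ x - φ y) ^ 2) := fun x y s t hst => by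
  dsimp only
  rw [h x y s t hst, eq_sub_of_add_eq' hst]; ring

theorem comp (h : HasJensenGap φ D) {g : F → E} (hg : IsLinearMap ℝ g) :
    HasJensenGap (fun x => φ (g x)) (fun x y => D (g x) (g y)) := fun x y s t hst => by
  simpa only [hg.map_add, hg.map_smul] using h (g x) (g y) s t hst

end HasJensenGap

theorem hasJensenGap_const (c : ℝ) : HasJensenGap (fun _ : E => c) fun _ _ => 0 :=
  fun _ _ s t hst => by linear_combination (-c) * hst

theorem IsLinearMap.hasJensenGap {ℓ : E → ℝ} (hℓ : IsLinearMap ℝ ℓ) :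
    HasJensenGap ℓ fun _ _ => 0 :=
  fun x y s t _ => by simp [hℓ.map_add, hℓ.map_smul]

theorem LinearMap.BilinForm.hasJensenGap_apply_self (B : LinearMap.BilinForm ℝ E) :
    HasJensenGap (fun x => B x x) (fun x y => B (x - y) (x - y)) := fun x y s t hst => by
  simp only [map_add, map_sub, map_smul, LinearMap.add_apply, LinearMap.sub_apply,
    LinearMap.smul_apply, smul_eq_mul]
  rw [eq_sub_of_add_eq' hst]; ring

theorem hasJensenGap_norm_sub_sq {G : Type*} [NormedAddCommGroup G] [InnerProductSpace ℝ G]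
    (c : G) : HasJensenGap (fun x => ‖x - c‖ ^ 2) (fun x y => ‖x - y‖ ^ 2) :=
  fun x y s t hst => by
    obtain rfl := eq_sub_of_add_eq' hst
    dsimp only
    have hmid : s • x + (1 - s) • y - c = s • (x - c) + (1 - s) • (y - c) := by module
    have hdiff : x - y = (x - c) - (y - c) := by abel
    rw [hmid, hdiff]
    generalize x - c = u, y - c = w
    rw [norm_add_sq_real, norm_sub_sq_real, norm_smul, norm_smul,
      real_inner_smul_left, real_inner_smul_right, mul_pow, mul_pow, Real.norm_eq_abs,
      Real.norm_eq_abs, sq_abs, sq_abs]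
    ring

end JensenGap

section Laplacian

variable {ι F : Type*} [Fintype ι] [NormedAddCommGroup F] [InnerProductSpace ℝ F]

/-- `(y, x) ↦ yᵀ (L ⊗ I) x` on families of vectors. -/
def Matrix.kronIdBilin (L : Matrix ι ι ℝ) : LinearMap.BilinForm ℝ (ι → F) :=
  LinearMap.mk₂ ℝ (fun y x => ∑ i, inner ℝ (y i) (∑ j, L i j • x j))
    (fun _ _ _ => by simp only [Pi.add_apply, inner_add_left, Finset.sum_add_distrib])
    (fun _ _ _ => by simp only [Pi.smul_apply, real_inner_smul_left, Finset.mul_sum, smul_eq_mul])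
    (fun _ _ _ => by simp only [Pi.add_apply, smul_add, Finset.sum_add_distrib, inner_add_right])
    (fun c _ _ => by
      simp only [Pi.smul_apply, smul_comm _ c, ← Finset.smul_sum, real_inner_smul_right,
        Finset.mul_sum, smul_eq_mul])

theorem Matrix.kronIdBilin_apply (L : Matrix ι ι ℝ) (y x : ι → F) :
    L.kronIdBilin y x = ∑ i, inner ℝ (y i) (∑ j, L i j • x j) := rfl

theorem Matrix.PosSemidef.kronIdBilin_self_nonneg {L : Matrix ι ι ℝ} (hL : L.PosSemidef)
    (x : ι → F) : 0 ≤ L.kronIdBilin x x := by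
  obtain ⟨m, v, rfl⟩ := Matrix.posSemidef_iff_eq_sum_vecMulVec.1 hL
  have : (∑ k, Matrix.vecMulVec (v k) (star (v k))).kronIdBilin x x
      = ∑ k, ‖∑ i, v k i • x i‖ ^ 2 := by
    simp only [Matrix.kronIdBilin_apply, Matrix.sum_apply, Matrix.vecMulVec_apply, star_trivial,
      Finset.sum_smul, inner_sum, ← real_inner_self_eq_norm_sq, sum_inner,
      real_inner_smul_left, real_inner_smul_right, mul_smul]
    rw [Finset.sum_congr rfl fun _ _ => Finset.sum_comm, Finset.sum_comm]
    exact Finset.sum_congr rfl fun _ _ => Finset.sum_congr rfl fun _ _ =>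
      Finset.sum_congr rfl fun _ _ => by rw [real_inner_comm]
  rw [this]
  positivity

theorem Matrix.PosSemidef.toBilin'_self_nonneg [DecidableEq ι] {L : Matrix ι ι ℝ}
    (hL : L.PosSemidef) (z : ι → ℝ) : 0 ≤ Matrix.toBilin' L z z := by
  simpa [Matrix.toBilin'_apply'] using hL.dotProduct_mulVec_nonneg z

end Laplacian

section Epigraphs

variable {ι E : Type*}

theorem convex_setOf_forall_le [AddCommGroup E] [Module ℝ E] {g : E → ℝ}
    (hg : ConvexOn ℝ Set.univ g) : Convex ℝ {p : (ι → E) × (ι → ℝ) | ∀ i, g (p.1 i) ≤ p.2 i} :=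
  fun p hp q hq s t hs ht hst i =>
    calc g (s • p.1 i + t • q.1 i) ≤ s • g (p.1 i) + t • g (q.1 i) :=
          hg.2 trivial trivial hs ht hst
      _ ≤ s • p.2 i + t • q.2 i := add_le_add (smul_le_smul_of_nonneg_left (hp i) hs)
          (smul_le_smul_of_nonneg_left (hq i) ht)

theorem isClosed_setOf_forall_le [TopologicalSpace E] {g : E → ℝ} (hg : Continuous g) :
    IsClosed {p : (ι → E) × (ι → ℝ) | ∀ i, g (p.1 i) ≤ p.2 i} := by
  rw [Set.ofPred_forall]
  exact isClosed_iInter fun i => isClosed_le (by fun_prop) (by fun_prop)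

theorem mem_interior_setOf_forall_le [Finite ι] [TopologicalSpace E] {g : E → ℝ}
    (hg : Continuous g) {p : (ι → E) × (ι → ℝ)} (hp : ∀ i, g (p.1 i) < p.2 i) :
    p ∈ interior {p : (ι → E) × (ι → ℝ) | ∀ i, g (p.1 i) ≤ p.2 i} := by
  refine interior_maximal (t := {p : (ι → E) × (ι → ℝ) | ∀ i, g (p.1 i) < p.2 i})
    (fun q hq i => (hq i).le) ?_ hp
  rw [Set.ofPred_forall]
  exact isOpen_iInter_of_finite fun i => isOpen_lt (by fun_prop) (by fun_prop)

end Epigraphs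

section LeastSquares

variable {M : ℕ}

theorem convexOn_mul_sum_sq_castSucc_add_one {a : ℝ} (ha : 0 ≤ a) :
    ConvexOn ℝ Set.univ fun x : Vec (M + 1) => a * ((∑ j : Fin M, x (Fin.castSucc j) ^ 2) + 1) := by
  have hcoord (j : Fin M) : IsLinearMap ℝ fun x : Vec (M + 1) => x (Fin.castSucc j) :=
    ⟨fun _ _ => rfl, fun _ _ => rfl⟩
  exact (((HasJensenGap.sum Finset.univ fun j _ => (hcoord j).hasJensenGap.sq).add
    (hasJensenGap_const 1)).const_mul a).convexOn fun _ _ => by positivity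

/-- The residual `ξ_m - (ξ_{1:m-1}; 1)ᵀ x` of the least-squares loss. -/
def lsResidual (x ξ : Vec (M + 1)) : ℝ :=
  ξ (Fin.last M) - ((∑ i : Fin M, ξ (Fin.castSucc i) * x (Fin.castSucc i)) + x (Fin.last M))

theorem hasJensenGap_lsResidual_left (ξ : Vec (M + 1)) :
    HasJensenGap (fun x => lsResidual x ξ) fun _ _ => 0 := fun x y s t hst => by
  simp only [lsResidual, PiLp.add_apply, PiLp.smul_apply, smul_eq_mul, mul_add,
    Finset.sum_add_distrib, mul_left_comm _ s, mul_left_comm _ t, ← Finset.mul_sum]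
  rw [eq_sub_of_add_eq' hst]; ring

theorem hasJensenGap_lsResidual_right (x : Vec (M + 1)) :
    HasJensenGap (lsResidual x) fun _ _ => 0 := fun ξ ξ' s t hst => by
  simp only [lsResidual, PiLp.add_apply, PiLp.smul_apply, smul_eq_mul, add_mul,
    Finset.sum_add_distrib, mul_assoc, ← Finset.mul_sum]
  rw [eq_sub_of_add_eq' hst]; ring

theorem sq_lsResidual_sub_le (x ξ ξ' : Vec (M + 1)) :
    (lsResidual x ξ - lsResidual x ξ') ^ 2
      ≤ ((∑ i : Fin M, x (Fin.castSucc i) ^ 2) + 1) * ‖ξ - ξ'‖ ^ 2 := by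
  -- Cauchy–Schwarz against `b = (-x_{1:m-1}; 1)`
  set b : Fin (M + 1) → ℝ := Fin.snoc (fun i => -x (Fin.castSucc i)) 1
  have hres : lsResidual x ξ - lsResidual x ξ' = ∑ j, b j * (ξ - ξ') j := by
    simp only [lsResidual, b, Fin.sum_univ_castSucc, Fin.snoc_castSucc, Fin.snoc_last,
      PiLp.sub_apply, neg_mul, Finset.sum_neg_distrib, one_mul]
    simp only [mul_comm (x _), sub_mul, Finset.sum_sub_distrib]
    ring
  have hb : ∑ j, b j ^ 2 = (∑ i : Fin M, x (Fin.castSucc i) ^ 2) + 1 := by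
    simp [b, Fin.sum_univ_castSucc]
  rw [hres, ← hb, EuclideanSpace.norm_sq_eq]
  simp only [Real.norm_eq_abs, sq_abs]
  exact Finset.sum_mul_sq_le_sq_mul_sq _ _ _

theorem mul_sq_lsResidual_sub_le {a lam : ℝ} (ha : 0 ≤ a) {x : Vec (M + 1)}
    (hlam : a * ((∑ i : Fin M, x (Fin.castSucc i) ^ 2) + 1) ≤ lam) (ξ ξ' : Vec (M + 1)) :
    a * (lsResidual x ξ - lsResidual x ξ') ^ 2 ≤ lam * ‖ξ - ξ'‖ ^ 2 :=
  calc a * (lsResidual x ξ - lsResidual x ξ') ^ 2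
      ≤ a * (((∑ i : Fin M, x (Fin.castSucc i) ^ 2) + 1) * ‖ξ - ξ'‖ ^ 2) :=
        mul_le_mul_of_nonneg_left (sq_lsResidual_sub_le x ξ ξ') ha
    _ ≤ lam * ‖ξ - ξ'‖ ^ 2 := by
        rw [← mul_assoc]; exact mul_le_mul_of_nonneg_right hlam (sq_nonneg _)

end LeastSquares

section Lagrangian

variable {M n N : ℕ} {a ε : ℝ} {f : Vec (M + 1) → Vec (M + 1) → ℝ} {ξhat : Fin N → Vec (M + 1)}
  {v : Fin N → Fin n} {L : Matrix (Fin n) (Fin n) ℝ}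

theorem Ltld_eq_of_lsResidual (hf : ∀ x ξ, f x ξ = a * lsResidual x ξ ^ 2)
    (xv : Fin n → Vec (M + 1)) (lv ν : Fin n → ℝ) (η : Fin n → Vec (M + 1))
    (ξs : Fin N → Vec (M + 1)) :
    Ltld ε f ξhat v L xv lv ν η ξs =
      ε ^ 2 / n * ∑ i, lv i
        + 1 / N * ∑ k, (a * lsResidual (xv (v k)) (ξs k) ^ 2 - lv (v k) * ‖ξs k - ξhat k‖ ^ 2)
        + Matrix.toBilin' L ν lv + L.kronIdBilin η xv
        + 1 / 2 * L.kronIdBilin xv xv + 1 / 2 * Matrix.toBilin' L lv lv := by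
  simp only [Ltld, gk, hf, Matrix.toBilin'_apply', Matrix.kronIdBilin_apply, dotProduct]

theorem convexOn_Ltld (hf : ∀ x ξ, f x ξ = a * lsResidual x ξ ^ 2) (ha : 0 ≤ a)
    (hL : L.PosSemidef) (ν : Fin n → ℝ) (η : Fin n → Vec (M + 1)) (ξs : Fin N → Vec (M + 1)) :
    ConvexOn ℝ Set.univ fun p : (Fin n → Vec (M + 1)) × (Fin n → ℝ) =>
      Ltld ε f ξhat v L p.1 p.2 ν η ξs := by
  simp only [Ltld_eq_of_lsResidual hf]
  have hx : IsLinearMap ℝ fun p : (Fin n → Vec (M + 1)) × (Fin n → ℝ) => p.1 :=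
    ⟨fun _ _ => rfl, fun _ _ => rfl⟩
  have hlam : IsLinearMap ℝ fun p : (Fin n → Vec (M + 1)) × (Fin n → ℝ) => p.2 :=
    ⟨fun _ _ => rfl, fun _ _ => rfl⟩
  have hxi (i : Fin n) : IsLinearMap ℝ fun p : (Fin n → Vec (M + 1)) × (Fin n → ℝ) => p.1 i :=
    ⟨fun _ _ => rfl, fun _ _ => rfl⟩
  have hlami (i : Fin n) : IsLinearMap ℝ fun p : (Fin n → Vec (M + 1)) × (Fin n → ℝ) => p.2 i :=
    ⟨fun _ _ => rfl, fun _ _ => rfl⟩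
  have hradius :=
    (HasJensenGap.sum Finset.univ fun i _ => (hlami i).hasJensenGap).const_mul (ε ^ 2 / n)
  have hloss := (HasJensenGap.sum Finset.univ fun k _ =>
    (((hasJensenGap_lsResidual_left (ξs k)).comp (hxi (v k))).sq.const_mul a).sub
      ((hlami (v k)).hasJensenGap.mul_const (‖ξs k - ξhat k‖ ^ 2))).const_mul (1 / N)
  have hcons_l := (Matrix.toBilin' L ν).isLinear.hasJensenGap.comp hlam
  have hcons_x := (L.kronIdBilin η).isLinear.hasJensenGap.comp hx
  have hpen_x := (L.kronIdBilin.hasJensenGap_apply_self.comp hx).const_mul (1 / 2)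
  have hpen_l := ((Matrix.toBilin' L).hasJensenGap_apply_self.comp hlam).const_mul (1 / 2)
  refine (((((hradius.add hloss).add hcons_l).add hcons_x).add hpen_x).add hpen_l).convexOn
    fun p q => ?_
  simp only [Finset.sum_const_zero, mul_zero, zero_mul, sub_zero, add_zero]
  exact add_nonneg
    (add_nonneg (by positivity) (mul_nonneg (by norm_num) (hL.kronIdBilin_self_nonneg _)))
    (mul_nonneg (by norm_num) (hL.toBilin'_self_nonneg _))

theorem concaveOn_Ltld (hf : ∀ x ξ, f x ξ = a * lsResidual x ξ ^ 2) (ha : 0 ≤ a)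
    (xv : Fin n → Vec (M + 1)) (lv : Fin n → ℝ)
    (hlv : ∀ i, a * ((∑ j : Fin M, xv i (Fin.castSucc j) ^ 2) + 1) ≤ lv i) :
    ConcaveOn ℝ Set.univ
      fun q : (Fin n → ℝ) × (Fin n → Vec (M + 1)) × (Fin N → Vec (M + 1)) =>
        Ltld ε f ξhat v L xv lv q.1 q.2.1 q.2.2 := by
  simp only [Ltld_eq_of_lsResidual hf]
  have hν : IsLinearMap ℝ
      fun q : (Fin n → ℝ) × (Fin n → Vec (M + 1)) × (Fin N → Vec (M + 1)) => q.1 :=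
    ⟨fun _ _ => rfl, fun _ _ => rfl⟩
  have hη : IsLinearMap ℝ
      fun q : (Fin n → ℝ) × (Fin n → Vec (M + 1)) × (Fin N → Vec (M + 1)) => q.2.1 :=
    ⟨fun _ _ => rfl, fun _ _ => rfl⟩
  have hξ (k : Fin N) : IsLinearMap ℝ
      fun q : (Fin n → ℝ) × (Fin n → Vec (M + 1)) × (Fin N → Vec (M + 1)) => q.2.2 k :=
    ⟨fun _ _ => rfl, fun _ _ => rfl⟩
  have hloss := (HasJensenGap.sum Finset.univ fun k _ =>
    (((hasJensenGap_lsResidual_right (xv (v k))).comp (hξ k)).sq.const_mul a).sub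
      (((hasJensenGap_norm_sub_sq (ξhat k)).comp (hξ k)).const_mul (lv (v k)))).const_mul (1 / N)
  have hcons_l := ((Matrix.toBilin' L).flip lv).isLinear.hasJensenGap.comp hν
  have hcons_x := (L.kronIdBilin.flip xv).isLinear.hasJensenGap.comp hη
  refine (((((hasJensenGap_const _).add hloss).add hcons_l).add hcons_x).add
    (hasJensenGap_const _)).add (hasJensenGap_const _) |>.concaveOn fun q q' => ?_
  simp only [add_zero, zero_add]
  exact mul_nonpos_of_nonneg_of_nonpos (by positivity) (Finset.sum_nonpos fun k _ =>
    sub_nonpos.2 (mul_sq_lsResidual_sub_le ha (hlv (v k)) _ _))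

end Lagrangian

theorem Ltld_convex_concave_of_least_squares_f_general
    {M n N : ℕ}
    (a : ℝ) (ha : 0 < a)
    (f : Vec (M + 1) → Vec (M + 1) → ℝ)
    (hf : ∀ (x ξ : Vec (M + 1)),
      f x ξ = a * (ξ (Fin.last M)
        - ((∑ i : Fin M, ξ (Fin.castSucc i) * x (Fin.castSucc i)) + x (Fin.last M))) ^ 2)
    (ξhat : Fin N → Vec (M + 1)) (ε : ℝ)
    (v : Fin N → Fin n)
    (Lap : Matrix (Fin n) (Fin n) ℝ) (hLpsd : Lap.PosSemidef) :
    IsClosed {p : (Fin n → Vec (M + 1)) × (Fin n → ℝ) | (∀ i, 0 ≤ p.2 i) ∧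
        ∀ i, a * ((∑ j : Fin M, (p.1 i (Fin.castSucc j)) ^ 2) + 1) ≤ p.2 i} ∧
    Convex ℝ {p : (Fin n → Vec (M + 1)) × (Fin n → ℝ) | (∀ i, 0 ≤ p.2 i) ∧
        ∀ i, a * ((∑ j : Fin M, (p.1 i (Fin.castSucc j)) ^ 2) + 1) ≤ p.2 i} ∧
    (interior {p : (Fin n → Vec (M + 1)) × (Fin n → ℝ) | (∀ i, 0 ≤ p.2 i) ∧
        ∀ i, a * ((∑ j : Fin M, (p.1 i (Fin.castSucc j)) ^ 2) + 1) ≤ p.2 i}).Nonempty ∧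
    (∀ (ν : Fin n → ℝ) (η : Fin n → Vec (M + 1)) (ξs : Fin N → Vec (M + 1)),
      ConvexOn ℝ {p : (Fin n → Vec (M + 1)) × (Fin n → ℝ) | (∀ i, 0 ≤ p.2 i) ∧
          ∀ i, a * ((∑ j : Fin M, (p.1 i (Fin.castSucc j)) ^ 2) + 1) ≤ p.2 i}
        (fun p => Ltld ε f ξhat v Lap p.1 p.2 ν η ξs)) ∧
    (∀ (xv : Fin n → Vec (M + 1)) (lv : Fin n → ℝ), (∀ i, 0 ≤ lv i) →
      (∀ i, a * ((∑ j : Fin M, (xv i (Fin.castSucc j)) ^ 2) + 1) ≤ lv i) →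
      ConcaveOn ℝ Set.univ
        (fun q : (Fin n → ℝ) × (Fin n → Vec (M + 1)) × (Fin N → Vec (M + 1)) =>
          Ltld ε f ξhat v Lap xv lv q.1 q.2.1 q.2.2)) := by
  have hw : Continuous fun x : Vec (M + 1) => a * ((∑ j : Fin M, x (Fin.castSucc j) ^ 2) + 1) := by
    fun_prop
  have hconv := (convex_setOf_forall_le (ι := Fin n) (convexOn_const (0 : ℝ) convex_univ)).inter
    (convex_setOf_forall_le (ι := Fin n) (convexOn_mul_sum_sq_castSucc_add_one (M := M) ha.le))
  refine ⟨(isClosed_setOf_forall_le continuous_const).inter (isClosed_setOf_forall_le hw), hconv,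
    ⟨(0, fun _ => a + 1), ?_⟩, fun ν η ξs => (convexOn_Ltld hf ha.le hLpsd ν η ξs).subset
      (Set.subset_univ _) hconv, fun xv lv _ hlv => concaveOn_Ltld hf ha.le xv lv hlv⟩
  have hnonneg := mem_interior_setOf_forall_le (ι := Fin n) (p := (0, fun _ => a + 1))
    (continuous_const (y := (0 : ℝ)) (X := Vec (M + 1))) fun _ => by positivity
  have hweight := mem_interior_setOf_forall_le (ι := Fin n) (p := (0, fun _ => a + 1)) hw
    fun _ => by simp
  exact (interior_inter.superset (Set.mem_inter hnonneg hweight) :)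

/-- for the least-squares loss f(x, ξ) = a(ξ_m − (ξ_{1:m−1}; 1)ᵀx)²
(d = m = M + 1) and C = {(x_v, λ_v) : λ_v ≥ 0, λ^i ≥ a‖(x^i_{1:m−1}; 1)‖² ∀i},
the set C is closed and convex with nonempty interior, and L̃_aug is convex-concave
on C × (ℝⁿ × ℝ^{nd} × ℝ^{mN}). -/
theorem Ltld_convex_concave_of_least_squares_f
    {M n N : ℕ} (hn : 0 < n) (hN : 0 < N)
    (a : ℝ) (ha : 0 < a)
    (f : Vec (M + 1) → Vec (M + 1) → ℝ)
    (hf : ∀ (x ξ : Vec (M + 1)),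
      f x ξ = a * (ξ (Fin.last M)
        - ((∑ i : Fin M, ξ (Fin.castSucc i) * x (Fin.castSucc i)) + x (Fin.last M))) ^ 2)
    (ξhat : Fin N → Vec (M + 1)) (ε : ℝ) (hε : 0 < ε)
    (v : Fin N → Fin n) (hv : Function.Surjective v)
    (Lap : Matrix (Fin n) (Fin n) ℝ) (hLsym : Lap.IsSymm) (hLpsd : Lap.PosSemidef)
    (hLker : ∀ w : Fin n → ℝ, Lap.mulVec w = 0 ↔ ∃ c : ℝ, w = fun _ => c) :
    IsClosed {p : (Fin n → Vec (M + 1)) × (Fin n → ℝ) | (∀ i, 0 ≤ p.2 i) ∧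
        ∀ i, a * ((∑ j : Fin M, (p.1 i (Fin.castSucc j)) ^ 2) + 1) ≤ p.2 i} ∧
    Convex ℝ {p : (Fin n → Vec (M + 1)) × (Fin n → ℝ) | (∀ i, 0 ≤ p.2 i) ∧
        ∀ i, a * ((∑ j : Fin M, (p.1 i (Fin.castSucc j)) ^ 2) + 1) ≤ p.2 i} ∧
    (interior {p : (Fin n → Vec (M + 1)) × (Fin n → ℝ) | (∀ i, 0 ≤ p.2 i) ∧
        ∀ i, a * ((∑ j : Fin M, (p.1 i (Fin.castSucc j)) ^ 2) + 1) ≤ p.2 i}).Nonempty ∧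
    (∀ (ν : Fin n → ℝ) (η : Fin n → Vec (M + 1)) (ξs : Fin N → Vec (M + 1)),
      ConvexOn ℝ {p : (Fin n → Vec (M + 1)) × (Fin n → ℝ) | (∀ i, 0 ≤ p.2 i) ∧
          ∀ i, a * ((∑ j : Fin M, (p.1 i (Fin.castSucc j)) ^ 2) + 1) ≤ p.2 i}
        (fun p => Ltld ε f ξhat v Lap p.1 p.2 ν η ξs)) ∧
    (∀ (xv : Fin n → Vec (M + 1)) (lv : Fin n → ℝ), (∀ i, 0 ≤ lv i) →
      (∀ i, a * ((∑ j : Fin M, (xv i (Fin.castSucc j)) ^ 2) + 1) ≤ lv i) →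
      ConcaveOn ℝ Set.univ
        (fun q : (Fin n → ℝ) × (Fin n → Vec (M + 1)) × (Fin N → Vec (M + 1)) =>
          Ltld ε f ξhat v Lap xv lv q.1 q.2.1 q.2.2)) :=
  Ltld_convex_concave_of_least_squares_f_general a ha f hf ξhat ε v Lap hLpsd

end
end
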